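/- arXiv:1710.00979 — 6 statements merged into one kernel-verified Lean document; each statement's English description precedes it below -/
import Mathlib

section
/- Let M be a positive integer, p ∈ [0,1], and let S be a numerical semigroup all of whose minimal generators are at most M. Then Σ_{B ⊆ {1,…,M}, ⟨B⟩ = S} p^{|B|}(1−p)^{M−|B|} = p^{e(S)}·(1−p)^{g_M(S)}, where g_M(S) denotes the number of gaps of S that are at most M. If moreover S is cofinite, S ≠ ℕ, and F(S) ≤ M, then this probability equals p^{e(S)}·(1−p)^{g(S)}. -/
open Filter Topology
open scoped Classical BigOperators

/-- The set of gaps of a numerical semigroup `S ⊆ ℕ`. -/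
def gapSet (S : AddSubmonoid ℕ) : Set ℕ := {n : ℕ | n ∉ S}

/-- `S` is cofinite if its set of gaps is finite. -/
def IsCofinite (S : AddSubmonoid ℕ) : Prop := (gapSet S).Finite

/-- The minimal generators of `S`: nonzero elements of `S` that are not the
sum of two nonzero elements of `S`. -/
def minGens (S : AddSubmonoid ℕ) : Set ℕ :=
  {s : ℕ | s ∈ S ∧ s ≠ 0 ∧ ¬ ∃ a ∈ S, ∃ b ∈ S, a ≠ 0 ∧ b ≠ 0 ∧ s = a + b}

/-- The embedding dimension `e(S)`: the number of minimal generators of `S`. -/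
noncomputable def embDim (S : AddSubmonoid ℕ) : ℕ := (minGens S).ncard

/-- The genus `g(S)`: the number of gaps of `S` (junk value `0` if `S` is not cofinite). -/
noncomputable def genus (S : AddSubmonoid ℕ) : ℕ := (gapSet S).ncard

/-- The Frobenius number `F(S)`: the largest gap of `S`
(junk value `0` if `S` is not cofinite or `S = ℕ`). -/
noncomputable def frob (S : AddSubmonoid ℕ) : ℕ := sSup (gapSet S)

/-- A cofinite numerical semigroup `S ≠ ℕ` is irreducible if it is maximal with
respect to inclusion among numerical semigroups with Frobenius number `F(S)`. -/
def IsIrred (S : AddSubmonoid ℕ) : Prop :=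
  IsCofinite S ∧ S ≠ ⊤ ∧
    ∀ T : AddSubmonoid ℕ, S ≤ T → frob T = frob S → T = S

/-- The number of gaps of `S` that are at most `M`. -/
noncomputable def gapsUpTo (S : AddSubmonoid ℕ) (M : ℕ) : ℕ :=
  {x : ℕ | x ∉ S ∧ x ≤ M}.ncard

/-- The probability weight of a generating set `B ⊆ {1, …, M}` in the ER-type
model `S(M, p)`. -/
noncomputable def wt (p : ℝ) (M : ℕ) (B : Finset ℕ) : ℝ :=
  p ^ B.card * (1 - p) ^ (M - B.card)

/-- The probability in the ER-type model `S(M, p)` that the random numerical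
semigroup `𝒮 = ⟨𝒜⟩` lies in the event `E`. -/
noncomputable def probEvent (M : ℕ) (p : ℝ) (E : Set (AddSubmonoid ℕ)) : ℝ :=
  ∑ B ∈ (Finset.Icc 1 M).powerset,
    if AddSubmonoid.closure (B : Set ℕ) ∈ E then wt p M B else 0

/-- The expectation in the ER-type model `S(M, p)` of an invariant `X` of the
random numerical semigroup `𝒮 = ⟨𝒜⟩`. -/
noncomputable def expectVal (M : ℕ) (p : ℝ) (X : AddSubmonoid ℕ → ℕ) : ℝ :=
  ∑ B ∈ (Finset.Icc 1 M).powerset,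
    (X (AddSubmonoid.closure (B : Set ℕ)) : ℝ) * wt p M B

/-- `h_{n,i}`: the number of numerical semigroups `T` with `n ∉ T`, embedding
dimension `i`, and all minimal generators strictly less than `n/2`. -/
noncomputable def hvec (n i : ℕ) : ℕ :=
  {T : AddSubmonoid ℕ | n ∉ T ∧ embDim T = i ∧ ∀ a ∈ minGens T, 2 * a < n}.ncard

/-- `a_n(p)`: the probability that `n` is not in the semigroup generated by a
random subset of `{1, …, n-1}` chosen with inclusion probability `p`. -/
noncomputable def anp (n : ℕ) (p : ℝ) : ℝ :=
  ∑ A ∈ (Finset.Icc 1 (n - 1)).powerset,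
    if n ∉ AddSubmonoid.closure (A : Set ℕ) then
      p ^ A.card * (1 - p) ^ (n - 1 - A.card) else 0

/-!
A subset `B ⊆ {1, …, M}` generates `S` exactly when it contains every minimal generator and
lies inside `S`. So the generating sets form the interval `[G, T]` of the lattice of finsets,
where `G` is the set of minimal generators and `T = S ∩ {1, …, M}`: the elements of `T \ G`
may be chosen freely, while the gaps up to `M` must all be left out. By the binomial theorem the
total weight of the interval is `p ^ |G| * (1 - p) ^ (M - |T|)`, and `M - |T|` is the number of
gaps up to `M`, which is the genus once `F(S) ≤ M`.
-/

open Finset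

theorem Finset.sum_Icc_pow_mul_pow {α R : Type*} [DecidableEq α] [CommSemiring R]
    {s t : Finset α} (h : s ⊆ t) (a b : R) :
    ∑ u ∈ Icc s t, a ^ #u * b ^ (#t - #u) = a ^ #s * (a + b) ^ (#t - #s) := by
  have hdisj : ∀ u ∈ (t \ s).powerset, Disjoint s u := fun u hu =>
    disjoint_of_subset_right (mem_powerset.mp hu) disjoint_sdiff
  rw [Icc_eq_image_powerset h, sum_image fun u hu v hv huv => by
    rw [← union_sdiff_cancel_left (hdisj u hu), huv, union_sdiff_cancel_left (hdisj v hv)]]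
  rw [← card_sdiff_of_subset h, ← sum_pow_mul_eq_add_pow a b (t \ s), mul_sum]
  refine sum_congr rfl fun u hu => ?_
  rw [card_union_of_disjoint (hdisj u hu), card_sdiff_of_subset h, Nat.sub_add_eq, pow_add,
    mul_assoc]

lemma closure_minGens (S : AddSubmonoid ℕ) : AddSubmonoid.closure (minGens S) = S := by
  refine le_antisymm (AddSubmonoid.closure_le.mpr fun s hs => hs.1) fun s hs => ?_
  induction s using Nat.strong_induction_on with
  | _ s ih =>
    by_cases hmin : s ∈ minGens S
    · exact AddSubmonoid.subset_closure hmin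
    rcases eq_or_ne s 0 with rfl | hs0
    · exact zero_mem _
    obtain ⟨a, ha, b, hb, ha0, hb0, rfl⟩ :
        ∃ a ∈ S, ∃ b ∈ S, a ≠ 0 ∧ b ≠ 0 ∧ s = a + b := by
      by_contra h
      exact hmin ⟨hs, hs0, h⟩
    exact add_mem (ih a (by omega) ha) (ih b (by omega) hb)

lemma minGens_subset_of_closure_eq {S : AddSubmonoid ℕ} {B : Set ℕ}
    (hB : AddSubmonoid.closure B = S) : minGens S ⊆ B := by
  have hshape : ∀ x ∈ AddSubmonoid.closure B,
      x = 0 ∨ x ∈ B ∨ ∃ a ∈ S, ∃ b ∈ S, a ≠ 0 ∧ b ≠ 0 ∧ x = a + b := by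
    intro x hx
    induction hx using AddSubmonoid.closure_induction with
    | mem x hx => exact .inr (.inl hx)
    | zero => exact .inl rfl
    | add x y hx hy ihx ihy =>
      rcases eq_or_ne x 0 with rfl | hx0
      · simpa using ihy
      rcases eq_or_ne y 0 with rfl | hy0
      · simpa using ihx
      exact .inr (.inr ⟨x, hB ▸ hx, y, hB ▸ hy, hx0, hy0, rfl⟩)
  rintro s ⟨hs, hs0, hirr⟩
  rcases hshape s (hB ▸ hs) with h | h | h
  · exact absurd h hs0
  · exact h
  · exact absurd h hirr

lemma closure_eq_iff_minGens_subset {S : AddSubmonoid ℕ} {B : Set ℕ} :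
    AddSubmonoid.closure B = S ↔ minGens S ⊆ B ∧ B ⊆ S := by
  refine ⟨fun hB => ⟨minGens_subset_of_closure_eq hB, hB ▸ AddSubmonoid.subset_closure⟩, ?_⟩
  rintro ⟨hGB, hBS⟩
  exact le_antisymm (AddSubmonoid.closure_le.mpr hBS)
    (closure_minGens S ▸ AddSubmonoid.closure_mono hGB)

section

variable (S : AddSubmonoid ℕ) (M : ℕ)

lemma minGens_eq_coe_filter (hgen : ∀ a ∈ minGens S, a ≤ M) :
    minGens S = ↑{a ∈ Icc 1 M | a ∈ minGens S} := by
  ext a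
  simp only [coe_filter, mem_Icc, Set.mem_ofPred_eq]
  exact ⟨fun ha => ⟨⟨Nat.one_le_iff_ne_zero.mpr ha.2.1, hgen a ha⟩, ha⟩, And.right⟩

lemma gapsUpTo_eq_sub_card : gapsUpTo S M = M - #{x ∈ Icc 1 M | x ∈ S} := by
  have hgaps : {x : ℕ | x ∉ S ∧ x ≤ M} = ↑{x ∈ Icc 1 M | x ∉ S} := by
    ext x
    simp only [Set.mem_ofPred_eq, coe_filter, mem_Icc]
    refine ⟨fun ⟨hx, hxM⟩ => ⟨⟨Nat.one_le_iff_ne_zero.mpr ?_, hxM⟩, hx⟩,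
      fun ⟨⟨_, hxM⟩, hx⟩ => ⟨hx, hxM⟩⟩
    rintro rfl
    exact hx (zero_mem S)
  have hsplit := card_filter_add_card_filter_not (s := Icc 1 M) (· ∈ S)
  rw [Nat.card_Icc, Nat.add_sub_cancel] at hsplit
  rw [gapsUpTo, hgaps, Set.ncard_coe_finset]
  omega

lemma gapsUpTo_eq_genus (hS : IsCofinite S) (hF : frob S ≤ M) : gapsUpTo S M = genus S := by
  rw [gapsUpTo, genus, gapSet]
  congr 1
  ext x
  simp only [Set.mem_ofPred_eq, and_iff_left_iff_imp]
  exact fun hx => (le_csSup hS.bddAbove hx).trans hF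

lemma embDim_eq_card_filter (hgen : ∀ a ∈ minGens S, a ≤ M) :
    embDim S = #{a ∈ Icc 1 M | a ∈ minGens S} := by
  rw [embDim, ← Set.ncard_coe_finset, ← minGens_eq_coe_filter S M hgen]

lemma filter_closure_eq_eq_Icc (hgen : ∀ a ∈ minGens S, a ≤ M) :
    ({B ∈ (Icc 1 M).powerset | AddSubmonoid.closure (B : Set ℕ) = S} : Finset (Finset ℕ))
      = Icc {a ∈ Icc 1 M | a ∈ minGens S} {x ∈ Icc 1 M | x ∈ S} := by
  set G : Finset ℕ := {a ∈ Icc 1 M | a ∈ minGens S}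
  have hG : minGens S = ↑G := minGens_eq_coe_filter S M hgen
  ext B
  rw [mem_filter, mem_powerset, mem_Icc, closure_eq_iff_minGens_subset, hG, coe_subset]
  refine ⟨fun ⟨hBM, hGB, hBS⟩ => ⟨hGB, fun x hx => mem_filter.mpr ⟨hBM hx, hBS hx⟩⟩,
    fun ⟨hGB, hBT⟩ => ⟨hBT.trans (filter_subset _ _), hGB, fun x hx => (mem_filter.mp (hBT hx)).2⟩⟩

lemma sum_wt_Icc {G T : Finset ℕ} (hGT : G ⊆ T) (hT : #T ≤ M) (p : ℝ) :
    ∑ B ∈ Icc G T, wt p M B = p ^ #G * (1 - p) ^ (M - #T) := by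
  have hwt : ∀ B ∈ Icc G T, wt p M B = p ^ #B * (1 - p) ^ (#T - #B) * (1 - p) ^ (M - #T) := by
    intro B hB
    have hBT := card_le_card (mem_Icc.mp hB).2
    rw [wt, mul_assoc, ← pow_add]
    congr 2
    omega
  rw [sum_congr rfl hwt, ← sum_mul, sum_Icc_pow_mul_pow hGT, add_sub_cancel, one_pow, mul_one]

end

theorem statement0_general (M : ℕ) (p : ℝ)
    (S : AddSubmonoid ℕ) (hgen : ∀ a ∈ minGens S, a ≤ M) :
    (∑ B ∈ (Finset.Icc 1 M).powerset,
        if AddSubmonoid.closure (B : Set ℕ) = S then wt p M B else 0)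
      = p ^ embDim S * (1 - p) ^ gapsUpTo S M
    ∧ (IsCofinite S → S ≠ ⊤ → frob S ≤ M →
        (∑ B ∈ (Finset.Icc 1 M).powerset,
            if AddSubmonoid.closure (B : Set ℕ) = S then wt p M B else 0)
          = p ^ embDim S * (1 - p) ^ genus S) := by
  have hsum : (∑ B ∈ (Icc 1 M).powerset,
        if AddSubmonoid.closure (B : Set ℕ) = S then wt p M B else 0)
      = p ^ embDim S * (1 - p) ^ gapsUpTo S M := by
    have hGT : {a ∈ Icc 1 M | a ∈ minGens S} ⊆ {x ∈ Icc 1 M | x ∈ S} :=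
      monotone_filter_right _ fun _ _ ha => ha.1
    have hT : #{x ∈ Icc 1 M | x ∈ S} ≤ M := (card_filter_le _ _).trans (Nat.card_Icc 1 M).le
    rw [← sum_filter, filter_closure_eq_eq_Icc S M hgen, sum_wt_Icc M hGT hT,
      embDim_eq_card_filter S M hgen, gapsUpTo_eq_sub_card]
  exact ⟨hsum, fun hS _ hF => hsum.trans (by rw [gapsUpTo_eq_genus S M hS hF])⟩

theorem statement0 (M : ℕ) (hM : 1 ≤ M) (p : ℝ) (hp : p ∈ Set.Icc (0 : ℝ) 1)
    (S : AddSubmonoid ℕ) (hgen : ∀ a ∈ minGens S, a ≤ M) :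
    (∑ B ∈ (Finset.Icc 1 M).powerset,
        if AddSubmonoid.closure (B : Set ℕ) = S then wt p M B else 0)
      = p ^ embDim S * (1 - p) ^ gapsUpTo S M
    ∧ (IsCofinite S → S ≠ ⊤ → frob S ≤ M →
        (∑ B ∈ (Finset.Icc 1 M).powerset,
            if AddSubmonoid.closure (B : Set ℕ) = S then wt p M B else 0)
          = p ^ embDim S * (1 - p) ^ genus S) :=
  statement0_general M p S hgen
end

section
/- The function t(M) = 1/M is a threshold function for cofiniteness in the ER-type model: if p : ℤ_{≥1} → [0,1] satisfies lim_{M→∞} M·p(M) = ∞, then lim_{M→∞} P(𝒮_M is cofinite) = 1; and if lim_{M→∞} M·p(M) = 0, then lim_{M→∞} P(𝒮_M is cofinite) = 0, where 𝒮_M ∼ S(M, p(M)). -/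
open Filter Topology
open scoped Classical BigOperators

/-!
A finite `B ⊆ ℕ` generates a cofinite semigroup iff `gcd B = 1`. Below the threshold,
cofiniteness needs `𝒜 ≠ ∅`, an event of probability at most `Mp`. Above it, write `x = Mp`: a
non-cofinite `⟨𝒜⟩` forces `|𝒜| ≤ 1`, or `𝒜` to consist of at least two of the `⌊M/d⌋` multiples
of some `d ≥ 2`. The first event has probability `(1-p)^M + x(1-p)^(M-1)`, the second at most
`(x/d)² (1-p)^(M/2)`, and since `∑ 1/d² ≤ 1` the total is at most `(1 + x + x²) e^(1 - x/2) → 0`.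
-/

open Finset

section SubsetProb

variable {α : Type*}

/-- The probability that a random subset of `T`, containing each element independently with
probability `p`, satisfies `E`. -/
noncomputable def subsetProb (p : ℝ) (T : Finset α) (E : Finset α → Prop) : ℝ :=
  ∑ B ∈ T.powerset, if E B then p ^ #B * (1 - p) ^ (#T - #B) else 0

variable {p : ℝ} {T : Finset α} {E F : Finset α → Prop}

lemma pow_mul_one_sub_pow_nonneg (hp₀ : 0 ≤ p) (hp₁ : p ≤ 1) (i j : ℕ) :
    0 ≤ p ^ i * (1 - p) ^ j :=
  mul_nonneg (pow_nonneg hp₀ _) (pow_nonneg (sub_nonneg.2 hp₁) _)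

lemma subsetProb_nonneg (hp₀ : 0 ≤ p) (hp₁ : p ≤ 1) : 0 ≤ subsetProb p T E :=
  sum_nonneg fun B _ => by
    split_ifs
    exacts [pow_mul_one_sub_pow_nonneg hp₀ hp₁ _ _, le_rfl]

lemma subsetProb_congr (h : ∀ B ⊆ T, (E B ↔ F B)) : subsetProb p T E = subsetProb p T F :=
  sum_congr rfl fun B hB => by rw [if_congr (h B (mem_powerset.1 hB)) rfl rfl]

lemma subsetProb_le_add (hp₀ : 0 ≤ p) (hp₁ : p ≤ 1) {G : Finset α → Prop}
    (h : ∀ B ⊆ T, E B → F B ∨ G B) :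
    subsetProb p T E ≤ subsetProb p T F + subsetProb p T G := by
  rw [subsetProb, subsetProb, subsetProb, ← sum_add_distrib]
  refine sum_le_sum fun B hB => ?_
  have := h B (mem_powerset.1 hB)
  have := pow_mul_one_sub_pow_nonneg hp₀ hp₁ #B (#T - #B)
  split_ifs <;> first | linarith | tauto

lemma subsetProb_mono (hp₀ : 0 ≤ p) (hp₁ : p ≤ 1) (h : ∀ B ⊆ T, E B → F B) :
    subsetProb p T E ≤ subsetProb p T F := by
  simpa [subsetProb] using
    subsetProb_le_add (G := fun _ => False) hp₀ hp₁ fun B hB hE => .inl (h B hB hE)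

lemma subsetProb_le_sum (hp₀ : 0 ≤ p) (hp₁ : p ≤ 1) {ι : Type*} (s : Finset ι)
    (G : ι → Finset α → Prop) (h : ∀ B ⊆ T, E B → ∃ i ∈ s, G i B) :
    subsetProb p T E ≤ ∑ i ∈ s, subsetProb p T (G i) := by
  simp only [subsetProb]
  rw [sum_comm]
  refine sum_le_sum fun B hB => ?_
  have hw := pow_mul_one_sub_pow_nonneg hp₀ hp₁ #B (#T - #B)
  have hterm : ∀ i ∈ s, 0 ≤ if G i B then p ^ #B * (1 - p) ^ (#T - #B) else 0 :=
    fun i _ => by split_ifs <;> simp [hw]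
  split_ifs with hE
  · obtain ⟨i, hi, hG⟩ := h B (mem_powerset.1 hB) hE
    simpa [hG] using single_le_sum hterm hi
  · exact sum_nonneg hterm

lemma subsetProb_true : subsetProb p T (fun _ => True) = 1 := by
  simp [subsetProb, sum_pow_mul_eq_add_pow]

lemma subsetProb_not : subsetProb p T (fun B => ¬ E B) = 1 - subsetProb p T E := by
  rw [← subsetProb_true (p := p) (T := T), subsetProb, subsetProb, subsetProb, ← sum_sub_distrib]
  refine sum_congr rfl fun B _ => ?_
  split_ifs <;> simp

lemma subsetProb_card_eq (k : ℕ) :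
    subsetProb p T (fun B => #B = k) = (#T).choose k * p ^ k * (1 - p) ^ (#T - k) := by
  have := sum_powerset_apply_card (x := T)
    (fun m => if m = k then p ^ m * (1 - p) ^ (#T - m) else 0)
  convert this using 1
  · exact sum_congr rfl fun B _ => by congr
  · simp only [smul_ite, smul_zero, sum_ite_eq', mem_range, nsmul_eq_mul]
    split_ifs with hk
    · ring
    · rw [Nat.choose_eq_zero_of_lt (by omega), Nat.cast_zero, zero_mul, zero_mul]

lemma subsetProb_insert [DecidableEq α] {a : α} {s : Finset α} (ha : a ∉ s) :
    subsetProb p (insert a s) E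
      = (1 - p) * subsetProb p s E + p * subsetProb p s (fun B => E (insert a B)) := by
  rw [subsetProb, sum_powerset_insert ha, subsetProb, subsetProb, mul_sum, mul_sum,
    card_insert_of_notMem ha]
  congr 1 <;> refine sum_congr rfl fun B hB => ?_
  · have : #B ≤ #s := card_le_card (mem_powerset.1 hB)
    split_ifs
    · rw [show #s + 1 - #B = #s - #B + 1 by omega, pow_succ]; ring
    · simp
  · have hB : #(insert a B) = #B + 1 := card_insert_of_notMem fun h => ha (mem_powerset.1 hB h)
    split_ifs
    · rw [hB, Nat.add_sub_add_right, pow_succ]; ring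
    · simp

lemma subsetProb_card_ge (hp₀ : 0 ≤ p) (hp₁ : p ≤ 1) (k : ℕ) :
    subsetProb p T (fun B => k ≤ #B) ≤ (#T).choose k * p ^ k := by
  classical
  induction T using Finset.induction_on generalizing k with
  | empty => cases k <;> simp [subsetProb]
  | insert a s ha ih =>
    rcases k with _ | k
    · simp [subsetProb_true]
    rw [subsetProb_insert ha, card_insert_of_notMem ha, Nat.choose_succ_succ', Nat.cast_add,
      subsetProb_congr (E := fun B => k + 1 ≤ #(insert a B)) (F := fun B => k ≤ #B) fun B hB => by
        rw [card_insert_of_notMem fun h => ha (hB h)]; omega]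
    have h₀ : 0 ≤ ((#s).choose (k + 1) : ℝ) * p ^ (k + 1) := by positivity
    calc (1 - p) * subsetProb p s (fun B => k + 1 ≤ #B) + p * subsetProb p s (fun B => k ≤ #B)
        ≤ (1 - p) * ((#s).choose (k + 1) * p ^ (k + 1)) + p * ((#s).choose k * p ^ k) := by
          gcongr
          exacts [ih _, ih _]
      _ ≤ _ := by rw [pow_succ] at h₀ ⊢; nlinarith [mul_nonneg hp₀ h₀]

lemma subsetProb_subset_and {D : Finset α} (hD : D ⊆ T) :
    subsetProb p T (fun B => B ⊆ D ∧ E B) = (1 - p) ^ (#T - #D) * subsetProb p D E := by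
  have hDT := card_le_card hD
  rw [subsetProb, subsetProb, mul_sum, ← sum_subset (powerset_mono.2 hD)]
  · refine sum_congr rfl fun B hB => ?_
    have hBD := mem_powerset.1 hB
    have := card_le_card hBD
    simp only [hBD, true_and]
    split_ifs
    · rw [show #T - #B = (#T - #D) + (#D - #B) by omega, pow_add]; ring
    · simp
  · intro B _ hB
    rw [if_neg fun h => hB (mem_powerset.2 h.1)]

end SubsetProb

lemma isCofinite_closure_iff (s : Set ℕ) :
    IsCofinite (AddSubmonoid.closure s) ↔ Nat.setGcd s = 1 := by
  constructor
  · intro hfin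
    obtain ⟨N, hN⟩ := hfin.bddAbove
    have hmem : ∀ n, N < n → n ∈ AddSubmonoid.closure s := fun n hn => by
      by_contra h
      exact (hN h).not_gt hn
    have h₁ := Nat.setGcd_dvd_of_mem_closure (hmem (N + 1) (by omega))
    have h₂ := Nat.setGcd_dvd_of_mem_closure (hmem (N + 1 + 1) (by omega))
    exact Nat.dvd_one.1 ((Nat.dvd_add_right h₁).1 h₂)
  · intro h
    obtain ⟨n, hn⟩ := Nat.exists_mem_closure_of_ge s
    exact (Set.finite_lt_nat n).subset fun m hm =>
      not_le.1 fun hnm => hm (hn m hnm (h ▸ one_dvd m))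

lemma exists_dvd_of_not_isCofinite {M : ℕ} {B : Finset ℕ} (hBM : B ⊆ Icc 1 M) (hB : B.Nonempty)
    (h : ¬ IsCofinite (AddSubmonoid.closure (B : Set ℕ))) :
    ∃ d ∈ Ioo 1 (M + 1), B ⊆ {n ∈ Icc 1 M | d ∣ n} := by
  obtain ⟨b, hb⟩ := hB
  have hdvd : ∀ n ∈ B, Nat.setGcd B ∣ n := fun n hn => Nat.setGcd_dvd_of_mem hn
  have hbM := mem_Icc.1 (hBM hb)
  have hpos := Nat.pos_of_dvd_of_pos (hdvd b hb) hbM.1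
  have hle := Nat.le_of_dvd hbM.1 (hdvd b hb)
  have hne := mt (isCofinite_closure_iff _).2 h
  exact ⟨Nat.setGcd B, mem_Ioo.2 ⟨by omega, by omega⟩,
    fun n hn => mem_filter.2 ⟨hBM hn, hdvd n hn⟩⟩

lemma probEvent_eq_subsetProb (M : ℕ) (p : ℝ) (E : Set (AddSubmonoid ℕ)) :
    probEvent M p E = subsetProb p (Icc 1 M) (fun B => AddSubmonoid.closure (B : Set ℕ) ∈ E) := by
  simp [probEvent, subsetProb, wt]

lemma probEvent_isCofinite_le {p : ℝ} (hp₀ : 0 ≤ p) (hp₁ : p ≤ 1) (M : ℕ) :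
    probEvent M p {S | IsCofinite S} ≤ M * p := by
  rw [probEvent_eq_subsetProb]
  calc _ ≤ subsetProb p (Icc 1 M) (fun B => 1 ≤ #B) := subsetProb_mono hp₀ hp₁ fun B _ hB => by
        rw [Set.mem_ofPred_eq, isCofinite_closure_iff] at hB
        refine card_pos.2 (nonempty_iff_ne_empty.2 fun h => ?_)
        rw [h, coe_empty, Nat.setGcd_eq_zero_iff.2 (Set.empty_subset _)] at hB
        exact zero_ne_one hB
    _ ≤ M * p := by simpa using subsetProb_card_ge hp₀ hp₁ (T := Icc 1 M) 1

lemma one_sub_pow_le_exp {p : ℝ} (hp₀ : 0 ≤ p) (hp₁ : p ≤ 1) {M k : ℕ} (hk : M ≤ 2 * k + 2) :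
    (1 - p) ^ k ≤ Real.exp (1 - M * p / 2) := by
  have hk' : (M : ℝ) ≤ 2 * k + 2 := by exact_mod_cast hk
  calc (1 - p) ^ k ≤ Real.exp (-p) ^ k :=
        pow_le_pow_left₀ (sub_nonneg.2 hp₁) (Real.one_sub_le_exp_neg p) k
    _ = Real.exp (-(k * p)) := by rw [← Real.exp_nat_mul]; ring_nf
    _ ≤ _ := Real.exp_le_exp.2 (by nlinarith)

lemma subsetProb_multiples_le {p : ℝ} (hp₀ : 0 ≤ p) (hp₁ : p ≤ 1) {M d : ℕ} (hd : 2 ≤ d) :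
    subsetProb p (Icc 1 M) (fun B => B ⊆ {n ∈ Icc 1 M | d ∣ n} ∧ 2 ≤ #B)
      ≤ (M * p / d) ^ 2 * Real.exp (1 - M * p / 2) := by
  have hcard : #{n ∈ Icc 1 M | d ∣ n} = M / d := by
    simpa [← Icc_add_one_left_eq_Ioc] using Nat.Ioc_filter_dvd_card_eq_div M d
  have hMd : M / d ≤ M / 2 := Nat.div_le_div_left hd two_pos
  have hchoose := subsetProb_card_ge hp₀ hp₁ (T := {n ∈ Icc 1 M | d ∣ n}) 2
  rw [hcard] at hchoose
  have hdiv : ((M / d : ℕ) : ℝ) ≤ M / d := Nat.cast_div_le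
  have hsq : ((M / d).choose 2 : ℝ) ≤ (M / d : ℝ) ^ 2 := by
    calc ((M / d).choose 2 : ℝ) ≤ ((M / d : ℕ) : ℝ) ^ 2 := by exact_mod_cast Nat.choose_le_pow _ _
      _ ≤ _ := by gcongr
  rw [subsetProb_subset_and (filter_subset _ _), hcard, Nat.card_Icc, add_tsub_cancel_right,
    mul_comm]
  calc subsetProb p {n ∈ Icc 1 M | d ∣ n} (fun B => 2 ≤ #B) * (1 - p) ^ (M - M / d)
      ≤ ((M / d : ℝ) ^ 2 * p ^ 2) * Real.exp (1 - M * p / 2) := by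
        gcongr
        · exact hchoose.trans (mul_le_mul_of_nonneg_right hsq (sq_nonneg p))
        · exact one_sub_pow_le_exp hp₀ hp₁ (by omega)
    _ = (M * p / d) ^ 2 * Real.exp (1 - M * p / 2) := by ring

lemma one_sub_probEvent_isCofinite_le {p : ℝ} (hp₀ : 0 ≤ p) (hp₁ : p ≤ 1) (M : ℕ) :
    1 - probEvent M p {S | IsCofinite S}
      ≤ (1 + M * p + (M * p) ^ 2) * Real.exp (1 - M * p / 2) := by
  set T := Icc 1 M
  have hT : #T = M := by simp [T]
  set G : ℕ → Finset ℕ → Prop := fun d B => B ⊆ {n ∈ T | d ∣ n} ∧ 2 ≤ #B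
  have hsplit : ∀ B ⊆ T, ¬ AddSubmonoid.closure (B : Set ℕ) ∈ {S | IsCofinite S} →
      #B = 0 ∨ #B = 1 ∨ ∃ d ∈ Ioo 1 (M + 1), G d B := by
    intro B hBT hB
    rcases Nat.lt_or_ge #B 2 with h | h
    · omega
    obtain ⟨d, hd, hBd⟩ := exists_dvd_of_not_isCofinite hBT (card_pos.1 (by omega)) hB
    exact .inr (.inr ⟨d, hd, hBd, h⟩)
  have h₀ : subsetProb p T (fun B => #B = 0) ≤ Real.exp (1 - M * p / 2) := by
    rw [subsetProb_card_eq, hT]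
    simpa using one_sub_pow_le_exp hp₀ hp₁ (M := M) (k := M) (by omega)
  have h₁ : subsetProb p T (fun B => #B = 1) ≤ M * p * Real.exp (1 - M * p / 2) := by
    rw [subsetProb_card_eq, hT, Nat.choose_one_right, pow_one]
    gcongr
    exact one_sub_pow_le_exp hp₀ hp₁ (by omega)
  have h₂ : subsetProb p T (fun B => ∃ d ∈ Ioo 1 (M + 1), G d B)
      ≤ (M * p) ^ 2 * Real.exp (1 - M * p / 2) := by
    calc _ ≤ ∑ d ∈ Ioo 1 (M + 1), subsetProb p T (G d) :=
          subsetProb_le_sum hp₀ hp₁ _ _ fun _ _ => id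
      _ ≤ ∑ d ∈ Ioo 1 (M + 1), (M * p / d) ^ 2 * Real.exp (1 - M * p / 2) :=
          sum_le_sum fun d hd => subsetProb_multiples_le hp₀ hp₁ (mem_Ioo.1 hd).1
      _ = (M * p) ^ 2 * Real.exp (1 - M * p / 2) * ∑ d ∈ Ioo 1 (M + 1), ((d : ℝ) ^ 2)⁻¹ := by
          rw [mul_sum]; exact sum_congr rfl fun d _ => by ring
      _ ≤ (M * p) ^ 2 * Real.exp (1 - M * p / 2) * 1 := by
          gcongr
          simpa [one_add_one_eq_two] using sum_Ioo_inv_sq_le (α := ℝ) 1 (M + 1)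
      _ = _ := mul_one _
  rw [probEvent_eq_subsetProb, ← subsetProb_not]
  calc _ ≤ subsetProb p T (fun B => #B = 0)
        + subsetProb p T (fun B => #B = 1 ∨ ∃ d ∈ Ioo 1 (M + 1), G d B) :=
        subsetProb_le_add hp₀ hp₁ hsplit
    _ ≤ subsetProb p T (fun B => #B = 0) + (subsetProb p T (fun B => #B = 1)
        + subsetProb p T (fun B => ∃ d ∈ Ioo 1 (M + 1), G d B)) := by
        gcongr
        exact subsetProb_le_add hp₀ hp₁ fun _ _ => id
    _ ≤ _ := by linarith

lemma tendsto_poly_mul_exp_neg_half :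
    Tendsto (fun x : ℝ => (1 + x + x ^ 2) * Real.exp (1 - x / 2)) atTop (𝓝 0) := by
  have h : ∀ n : ℕ, Tendsto (fun x : ℝ => x ^ n * Real.exp (-(x / 2))) atTop (𝓝 0) := fun n => by
    have := ((Real.tendsto_pow_mul_exp_neg_atTop_nhds_zero n).comp
      (tendsto_id.atTop_div_const two_pos)).const_mul (2 ^ n)
    rw [mul_zero] at this
    refine this.congr fun x => ?_
    simp only [Function.comp, id, div_pow]
    field_simp
  have := (((h 0).add (h 1)).add (h 2)).const_mul (Real.exp 1)
  rw [add_zero, add_zero, mul_zero] at this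
  refine this.congr fun x => ?_
  rw [sub_eq_add_neg, Real.exp_add]
  ring

theorem statement2 (p : ℕ → ℝ) (hp : ∀ M, p M ∈ Set.Icc (0 : ℝ) 1) :
    (Tendsto (fun M : ℕ => (M : ℝ) * p M) atTop atTop →
      Tendsto (fun M : ℕ => probEvent M (p M) {S | IsCofinite S}) atTop (𝓝 1)) ∧
    (Tendsto (fun M : ℕ => (M : ℝ) * p M) atTop (𝓝 0) →
      Tendsto (fun M : ℕ => probEvent M (p M) {S | IsCofinite S}) atTop (𝓝 0)) := by
  have hnonneg M : 0 ≤ probEvent M (p M) {S | IsCofinite S} := by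
    rw [probEvent_eq_subsetProb]; exact subsetProb_nonneg (hp M).1 (hp M).2
  refine ⟨fun hx => ?_, fun hx => ?_⟩
  · have hle_one M : probEvent M (p M) {S | IsCofinite S} ≤ 1 := by
      rw [probEvent_eq_subsetProb, ← subsetProb_true (p := p M) (T := Icc 1 M)]
      exact subsetProb_mono (hp M).1 (hp M).2 fun _ _ _ => trivial
    have hgap : Tendsto (fun M => 1 - probEvent M (p M) {S | IsCofinite S}) atTop (𝓝 0) :=
      squeeze_zero (fun M => sub_nonneg.2 (hle_one M))
        (fun M => one_sub_probEvent_isCofinite_le (hp M).1 (hp M).2 M)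
        (tendsto_poly_mul_exp_neg_half.comp hx)
    simpa using (tendsto_const_nhds (x := (1 : ℝ))).sub hgap
  · exact squeeze_zero hnonneg (fun M => probEvent_isCofinite_le (hp M).1 (hp M).2 M) hx
end

section
/- Let S be a cofinite numerical semigroup with S ≠ ℕ and Frobenius number F(S) = n. Then S is irreducible if and only if every integer s with 0 < s < n/2 and n − s ∉ S satisfies s ∈ S. -/
open Filter Topology
open scoped Classical BigOperators

/-!
If `T ⊇ S` has `F(T) = F(S) = n`, every `t ∈ T \ S` satisfies `t < n`, `2t ≠ n` and
`n - t ∉ S`, since otherwise `n ∈ T`; the condition, applied to whichever of `t` and `n - t` is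
below `n/2`, then forbids `t`. Conversely, if `s` and `n - s` are gaps with `0 < 2s < n`,
adjoining `n - s` to `S` keeps `n` a gap, because `n = u + k(n - s)` with `u ∈ S` forces `k ≤ 1`,
i.e. `u = n` or `u = s`. The enlarged semigroup has Frobenius number `n`, so `S` is not
irreducible.
-/

variable {S T : AddSubmonoid ℕ}

lemma gapSet_nonempty (hS : S ≠ ⊤) : (gapSet S).Nonempty := by
  contrapose! hS
  exact (AddSubmonoid.eq_top_iff' S).2 fun y => by_contra fun hy => hS.subset hy

lemma IsCofinite.mono (hST : S ≤ T) (hS : IsCofinite S) : IsCofinite T :=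
  hS.subset fun _ hy hyS => hy (hST hyS)

lemma isGreatest_frob (hS : IsCofinite S) (hS' : S ≠ ⊤) : IsGreatest (gapSet S) (frob S) :=
  ⟨Nat.sSup_mem (gapSet_nonempty hS') hS.bddAbove, fun _ hy => le_csSup hS.bddAbove hy⟩

lemma frob_eq_of_isGreatest {n : ℕ} (h : IsGreatest (gapSet S) n) : frob S = n :=
  h.csSup_eq

lemma mem_of_isGreatest_of_lt {n m : ℕ} (h : IsGreatest (gapSet S) n) (hm : n < m) : m ∈ S :=
  by_contra fun hmS => (h.2 hmS).not_gt hm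

lemma ne_top_of_frob_ne_zero (h : frob S ≠ 0) : S ≠ ⊤ := by
  rintro rfl
  simp [frob, gapSet] at h

lemma notMem_sup_closure_singleton {n x : ℕ} (hn : n ∉ S) (hnx : n - x ∉ S)
    (hx : n < 2 * x) : n ∉ S ⊔ AddSubmonoid.closure {x} := by
  simp only [AddSubmonoid.mem_sup, AddSubmonoid.mem_closure_singleton]
  rintro ⟨u, hu, _, ⟨k, rfl⟩, hukx⟩
  rw [smul_eq_mul] at hukx
  match k with
  | 0 => exact hn (by simpa [← hukx] using hu)
  | 1 => exact hnx (by rwa [show n - x = u by omega])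
  | k + 2 => nlinarith

lemma frob_sup_closure_singleton {n x : ℕ} (h : IsGreatest (gapSet S) n) (hnx : n - x ∉ S)
    (hx : n < 2 * x) : frob (S ⊔ AddSubmonoid.closure {x}) = n :=
  frob_eq_of_isGreatest ⟨notMem_sup_closure_singleton h.1 hnx hx, fun _ hm =>
    not_lt.1 fun hnm => hm (AddSubmonoid.mem_sup_left (mem_of_isGreatest_of_lt h hnm))⟩

lemma le_of_forall_mem_or_sub_mem {n : ℕ} (hST : S ≤ T) (hnT : n ∉ T)
    (habove : ∀ m, n < m → m ∈ S)
    (hcond : ∀ s : ℕ, 0 < s → 2 * s < n → n - s ∉ S → s ∈ S) : T ≤ S := by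
  intro t htT
  by_contra htS
  have htn : t < n := by
    by_contra! h
    rcases h.eq_or_lt with rfl | h
    exacts [hnT htT, htS (habove t h)]
  have hnt : n - t ∉ S := fun h => hnT (by simpa [htn.le] using T.add_mem (hST h) htT)
  have ht0 : 0 < t := Nat.pos_of_ne_zero fun h => htS (h ▸ S.zero_mem)
  rcases lt_trichotomy (2 * t) n with h | h | h
  · exact htS (hcond t ht0 h hnt)
  · exact hnT (by simpa [← h, two_mul] using T.add_mem htT htT)
  · exact hnt (hcond (n - t) (by omega) (by omega) (by rwa [Nat.sub_sub_self htn.le]))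

theorem statement3 (S : AddSubmonoid ℕ) (n : ℕ) (hS : IsCofinite S) (hS' : S ≠ ⊤)
    (hF : frob S = n) :
    IsIrred S ↔ ∀ s : ℕ, 0 < s → 2 * s < n → n - s ∉ S → s ∈ S := by
  have hgreat : IsGreatest (gapSet S) n := hF ▸ isGreatest_frob hS hS'
  constructor
  · rintro ⟨-, -, hmax⟩ s hs0 hs hns
    by_contra hsS
    have hfT := frob_sup_closure_singleton (x := n - s) hgreat
      (by rwa [Nat.sub_sub_self (by omega)]) (by omega)
    have hTS := hmax _ le_sup_left (hfT.trans hF.symm)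
    exact hns (hTS ▸ AddSubmonoid.mem_sup_right (AddSubmonoid.subset_closure rfl))
  · refine fun hcond => ⟨hS, hS', fun T hST hfT => le_antisymm ?_ hST⟩
    have hfT' : frob T ≠ 0 := hfT.trans hF ▸ fun h => hgreat.1 (h ▸ S.zero_mem)
    have hnT : n ∉ T :=
      hfT.trans hF ▸ (isGreatest_frob (hS.mono hST) (ne_top_of_frob_ne_zero hfT')).1
    exact le_of_forall_mem_or_sub_mem hST hnT (fun _ => mem_of_isGreatest_of_lt hgreat) hcond
end

section
/- Fix n ≥ 2, let S_1, …, S_r be all the irreducible numerical semigroups with Frobenius number n, and set F_i = S_i ∩ {1,…,n−1}. Suppose the indexing is such that Σ_{s ∈ F_i} s ≥ Σ_{s ∈ F_j} s whenever i < j. Then F_1, …, F_r is a shelling order: for all 1 ≤ j < i ≤ r there exists k < i such that F_j ∩ F_i ⊆ F_k ∩ F_i and #(F_k ∩ F_i) = #F_i − 1. -/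
open Filter Topology
open scoped Classical BigOperators

/-!
Irreducible numerical semigroups with Frobenius number `n` are determined by their facets
`F = S ∩ [1, n)`, and the facets are exactly the sets `F ⊆ (0, n)` closed under sums below `n`
that contain exactly one of `y, n - y` whenever `2y ≠ n`, and never `n / 2`. For facets
`F_j ≠ F_i` with `Σ F_j ≥ Σ F_i`, the map `y ↦ n - y` is a bijection `F_i \ F_j → F_j \ F_i`,
so the sum condition forces some `y ∈ F_i \ F_j` with `2y < n`. Exchanging the least such
element `x` for `n - x` yields another facet, of larger sum and hence of smaller index, whose
intersection with `F_i` is `F_i \ {x} ⊇ F_j ∩ F_i`.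
-/

open Finset

lemma gapSet_anti {S T : AddSubmonoid ℕ} (h : S ≤ T) : gapSet T ⊆ gapSet S :=
  fun _ hx hxS => hx (h hxS)

lemma frob_top : frob ⊤ = 0 := by
  simp [frob, gapSet]

lemma le_frob {S : AddSubmonoid ℕ} (hS : IsCofinite S) {m : ℕ} (hm : m ∉ S) : m ≤ frob S :=
  le_csSup hS.bddAbove hm

lemma frob_notMem {S : AddSubmonoid ℕ} (hS : IsCofinite S) (hne : S ≠ ⊤) : frob S ∉ S := by
  obtain ⟨m, hm⟩ : ∃ m, m ∉ S := by
    by_contra! h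
    exact hne (eq_top_iff.2 fun m _ => h m)
  exact Set.Nonempty.csSup_mem ⟨m, hm⟩ hS

lemma frob_notMem_of_ne_zero {S : AddSubmonoid ℕ} (hS : IsCofinite S) (h : frob S ≠ 0) :
    frob S ∉ S :=
  frob_notMem hS fun hS => h (hS ▸ frob_top)

lemma sub_notMem_of_mem {S : AddSubmonoid ℕ} {n y : ℕ} (hn : n ∉ S) (hy : y ∈ S)
    (hyn : y ≤ n) : n - y ∉ S :=
  fun h => hn (by simpa [Nat.add_sub_cancel' hyn] using S.add_mem hy h)

namespace IsIrred

variable {S : AddSubmonoid ℕ}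

lemma eq_of_le (h : IsIrred S) {T : AddSubmonoid ℕ} (hST : S ≤ T) (hT : frob S ∉ T) : T = S :=
  h.2.2 T hST <| le_antisymm (csSup_le_csSup h.1.bddAbove ⟨_, hT⟩ (gapSet_anti hST))
    (le_frob (h.1.subset (gapSet_anti hST)) hT)

lemma mem_of_forall_add_mul_ne (h : IsIrred S) {z : ℕ}
    (hz : ∀ s ∈ S, ∀ k : ℕ, s + k * z ≠ frob S) : z ∈ S := by
  have hsup : S ⊔ AddSubmonoid.closure {z} = S := by
    refine h.eq_of_le le_sup_left fun hmem => ?_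
    obtain ⟨s, hs, t, ht, hst⟩ := AddSubmonoid.mem_sup.1 hmem
    obtain ⟨k, rfl⟩ := AddSubmonoid.mem_closure_singleton.1 ht
    exact hz s hs k (by simpa using hst)
  exact hsup ▸ AddSubmonoid.mem_sup_right (AddSubmonoid.subset_closure (Set.mem_singleton z))

/-- Maximality forces one of `y`, `F(S) - y` into `S`: since `2z > F(S)` for the larger one, `z`,
adjoining `z` can only reach `F(S)` as `(F(S) - z) + z`. -/
lemma mem_or_sub_mem (h : IsIrred S) {y : ℕ} (hy : y ≤ frob S) (h2y : 2 * y ≠ frob S) :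
    y ∈ S ∨ frob S - y ∈ S := by
  have hF := frob_notMem h.1 h.2.1
  have large : ∀ z ≤ frob S, frob S < 2 * z → z ∈ S ∨ frob S - z ∈ S := by
    intro z hz h2z
    by_contra! hzS
    refine hzS.1 (h.mem_of_forall_add_mul_ne fun s hs k hsk => ?_)
    rcases k with _ | _ | k
    · rw [zero_mul, add_zero] at hsk
      exact hF (hsk ▸ hs)
    · exact hzS.2 (by rwa [show frob S - z = s by omega])
    · nlinarith
  rcases lt_or_gt_of_ne h2y with h2y | h2y
  · simpa [Nat.sub_sub_self hy, or_comm] using large (frob S - y) (by omega) (by omega)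
  · exact large y hy h2y

end IsIrred

noncomputable def facet (n : ℕ) (S : AddSubmonoid ℕ) : Finset ℕ :=
  (Finset.Icc 1 (n - 1)).filter (fun x => x ∈ S)

lemma mem_facet {n m : ℕ} {S : AddSubmonoid ℕ} :
    m ∈ facet n S ↔ 0 < m ∧ m < n ∧ m ∈ S := by
  simp only [facet, mem_filter, mem_Icc, ← and_assoc]
  refine and_congr_left fun _ => ?_
  omega

/-- The sets that arise as facets of irreducible numerical semigroups with Frobenius number `n`
(`IsIrred.isIrredFacet`, `IsIrredFacet.isIrred_toAddSubmonoid`). -/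
structure IsIrredFacet (n : ℕ) (G : Finset ℕ) : Prop where
  pos_lt : ∀ y ∈ G, 0 < y ∧ y < n
  add_mem : ∀ a ∈ G, ∀ b ∈ G, a + b < n → a + b ∈ G
  sub_notMem : ∀ y ∈ G, n - y ∉ G
  mem_or_sub_mem : ∀ y, 0 < y → y < n → 2 * y ≠ n → y ∈ G ∨ n - y ∈ G

namespace IsIrred

variable {S : AddSubmonoid ℕ}

lemma mem_iff_facet (h : IsIrred S) {m : ℕ} :
    m ∈ S ↔ m = 0 ∨ m ∈ facet (frob S) S ∨ frob S < m := by
  have hF := frob_notMem h.1 h.2.1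
  rw [mem_facet]
  constructor
  · intro hm
    have : m ≠ frob S := fun e => hF (e ▸ hm)
    rcases Nat.eq_zero_or_pos m with h0 | h0
    · exact Or.inl h0
    rcases lt_or_gt_of_ne this with hlt | hgt
    · exact Or.inr (Or.inl ⟨h0, hlt, hm⟩)
    · exact Or.inr (Or.inr hgt)
  · rintro (rfl | ⟨-, -, hm⟩ | hm)
    · exact S.zero_mem
    · exact hm
    · by_contra hmS
      exact (le_frob h.1 hmS).not_gt hm

lemma eq_of_facet_eq {T : AddSubmonoid ℕ} (hS : IsIrred S) (hT : IsIrred T)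
    (hST : frob S = frob T) (h : facet (frob S) S = facet (frob T) T) : S = T := by
  ext m
  rw [hS.mem_iff_facet, hT.mem_iff_facet, h, hST]

lemma isIrredFacet (h : IsIrred S) : IsIrredFacet (frob S) (facet (frob S) S) := by
  have hF := frob_notMem h.1 h.2.1
  refine ⟨fun y hy => ?_, fun a ha b hb hab => ?_, fun y hy hny => ?_, fun y hy hyn h2y => ?_⟩
  · obtain ⟨hy0, hyn, -⟩ := mem_facet.1 hy
    exact ⟨hy0, hyn⟩
  · obtain ⟨ha0, -, haS⟩ := mem_facet.1 ha
    exact mem_facet.2 ⟨by omega, hab, S.add_mem haS (mem_facet.1 hb).2.2⟩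
  · obtain ⟨-, hyn, hyS⟩ := mem_facet.1 hy
    exact sub_notMem_of_mem hF hyS hyn.le (mem_facet.1 hny).2.2
  · rcases h.mem_or_sub_mem hyn.le h2y with hyS | hyS
    · exact Or.inl (mem_facet.2 ⟨hy, hyn, hyS⟩)
    · exact Or.inr (mem_facet.2 ⟨by omega, by omega, hyS⟩)

end IsIrred

namespace IsIrredFacet

variable {n : ℕ} {G H : Finset ℕ}

lemma two_mul_ne (hG : IsIrredFacet n G) {y : ℕ} (hy : y ∈ G) : 2 * y ≠ n := by
  intro h
  exact hG.sub_notMem y hy (by rwa [show n - y = y by omega])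

lemma add_mem_or_lt (hG : IsIrredFacet n G) {a b : ℕ} (ha : a ∈ G) (hb : b ∈ G) :
    a + b ∈ G ∨ n < a + b := by
  rcases lt_trichotomy (a + b) n with hab | hab | hab
  · exact Or.inl (hG.add_mem a ha b hb hab)
  · exact absurd (by rwa [show b = n - a by omega] at hb) (hG.sub_notMem a ha)
  · exact Or.inr hab

def toAddSubmonoid (hG : IsIrredFacet n G) : AddSubmonoid ℕ where
  carrier := {m | m = 0 ∨ m ∈ G ∨ n < m}
  zero_mem' := Or.inl rfl
  add_mem' {a b} ha hb := by
    rcases ha with rfl | ha | ha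
    · simpa using hb
    rcases hb with rfl | hb | hb
    · simpa using Or.inr (Or.inl ha)
    · exact Or.inr (hG.add_mem_or_lt ha hb)
    all_goals exact Or.inr (Or.inr (by omega))

lemma mem_toAddSubmonoid (hG : IsIrredFacet n G) {m : ℕ} :
    m ∈ hG.toAddSubmonoid ↔ m = 0 ∨ m ∈ G ∨ n < m :=
  Iff.rfl

lemma facet_toAddSubmonoid (hG : IsIrredFacet n G) : facet n hG.toAddSubmonoid = G := by
  ext m
  rw [mem_facet, mem_toAddSubmonoid]
  constructor
  · rintro ⟨hm0, hmn, rfl | hm | hm⟩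
    · exact absurd hm0 (lt_irrefl 0)
    · exact hm
    · exact absurd hm hmn.not_gt
  · intro hm
    exact ⟨(hG.pos_lt m hm).1, (hG.pos_lt m hm).2, Or.inr (Or.inl hm)⟩

lemma notMem_toAddSubmonoid (hG : IsIrredFacet n G) (hn : 0 < n) : n ∉ hG.toAddSubmonoid := by
  rintro (h | h | h)
  · exact hn.ne' h
  · exact (hG.pos_lt n h).2.false
  · exact h.false

lemma gapSet_toAddSubmonoid_subset (hG : IsIrredFacet n G) :
    gapSet hG.toAddSubmonoid ⊆ Set.Iic n :=
  fun _ hm => not_lt.1 fun h => hm (Or.inr (Or.inr h))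

lemma frob_toAddSubmonoid (hG : IsIrredFacet n G) (hn : 0 < n) : frob hG.toAddSubmonoid = n :=
  le_antisymm (csSup_le ⟨n, hG.notMem_toAddSubmonoid hn⟩ hG.gapSet_toAddSubmonoid_subset)
    (le_csSup (Set.finite_Iic n |>.subset hG.gapSet_toAddSubmonoid_subset).bddAbove
      (hG.notMem_toAddSubmonoid hn))

lemma isIrred_toAddSubmonoid (hG : IsIrredFacet n G) (hn : 0 < n) : IsIrred hG.toAddSubmonoid := by
  have hcof : IsCofinite hG.toAddSubmonoid :=
    (Set.finite_Iic n).subset hG.gapSet_toAddSubmonoid_subset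
  refine ⟨hcof, fun h => hG.notMem_toAddSubmonoid hn (h ▸ AddSubmonoid.mem_top n),
    fun T hle hfrob => le_antisymm (fun m hmT => ?_) hle⟩
  rw [hG.frob_toAddSubmonoid hn] at hfrob
  have hnT : n ∉ T := hfrob ▸ frob_notMem_of_ne_zero (hcof.subset (gapSet_anti hle)) (by omega)
  rw [mem_toAddSubmonoid]
  by_contra! hm
  obtain ⟨hm0, hmG, hmn⟩ := hm
  have hmn' : m < n := lt_of_le_of_ne hmn fun h => hnT (h ▸ hmT)
  refine sub_notMem_of_mem hnT hmT hmn ?_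
  by_cases h2m : 2 * m = n
  · rwa [show n - m = m by omega]
  · exact hle (Or.inr (Or.inl ((hG.mem_or_sub_mem m (by omega) hmn' h2m).resolve_left hmG)))

lemma image_sub_sdiff (hG : IsIrredFacet n G) (hH : IsIrredFacet n H) :
    (G \ H).image (n - ·) = H \ G := by
  ext z
  simp only [mem_image, Finset.mem_sdiff]
  constructor
  · rintro ⟨y, ⟨hyG, hyH⟩, rfl⟩
    have hy := hG.pos_lt y hyG
    exact ⟨(hH.mem_or_sub_mem y hy.1 hy.2 (hG.two_mul_ne hyG)).resolve_left hyH,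
      hG.sub_notMem y hyG⟩
  · rintro ⟨hzH, hzG⟩
    have hz := hH.pos_lt z hzH
    refine ⟨n - z, ⟨?_, hH.sub_notMem z hzH⟩, by omega⟩
    exact (hG.mem_or_sub_mem z hz.1 hz.2 (hH.two_mul_ne hzH)).resolve_left hzG

lemma exists_mem_sdiff_two_mul_lt (hG : IsIrredFacet n G) (hH : IsIrredFacet n H) (hne : G ≠ H)
    (hsum : ∑ y ∈ G, y ≤ ∑ y ∈ H, y) : ∃ y ∈ G \ H, 2 * y < n := by
  have himage := hG.image_sub_sdiff hH
  have hnonempty : (G \ H).Nonempty := by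
    rw [nonempty_iff_ne_empty]
    intro h
    rw [h, image_empty, eq_comm, sdiff_eq_empty_iff_subset] at himage
    exact hne (subset_antisymm (sdiff_eq_empty_iff_subset.1 h) himage)
  by_contra! hlarge
  have hlt : ∑ y ∈ H \ G, y < ∑ y ∈ G \ H, y := by
    rw [← himage, sum_image fun a ha b hb hab => ?_]
    · refine sum_lt_sum_of_nonempty hnonempty fun y hy => ?_
      have := hlarge y hy
      have := hG.two_mul_ne (mem_sdiff.1 hy).1
      omega
    · have := (hG.pos_lt a (mem_sdiff.1 ha).1).2
      have := (hG.pos_lt b (mem_sdiff.1 hb).1).2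
      omega
  exact hlt.not_ge (sum_sdiff_le_sum_sdiff.2 hsum)

/-- Exchanging `x` for `n - x` keeps `G` a facet when every element of `G` below `x` lies in `H`:
the only new sums below `n` are `(n - x) + b` with `b < x`, and if one of these were missing
from `G` then `x - b` would be in `G`, hence in `H`, together with its complement `(n - x) + b`. -/
lemma exchange (hG : IsIrredFacet n G) (hH : IsIrredFacet n H) {x : ℕ} (hxG : x ∈ G)
    (hxH : x ∉ H) (hmin : ∀ y ∈ G, y < x → y ∈ H) (h2x : 2 * x < n) :
    IsIrredFacet n (insert (n - x) (G.erase x)) := by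
  have hx := hG.pos_lt x hxG
  have hnxH : n - x ∈ H := (hH.mem_or_sub_mem x hx.1 hx.2 h2x.ne).resolve_left hxH
  have hshift : ∀ b ∈ G, b < x → n - x + b ∈ G := by
    intro b hbG hbx
    have hb := hG.pos_lt b hbG
    have hcompl : n - (n - x + b) = x - b := by omega
    by_contra hc
    have hd : x - b ∈ G := hcompl ▸
      (hG.mem_or_sub_mem (n - x + b) (by omega) (by omega) (by omega)).resolve_left hc
    have hcH : n - x + b ∈ H := hH.add_mem _ hnxH _ (hmin b hbG hbx) (by omega)
    exact hH.sub_notMem _ hcH (hcompl ▸ hmin _ hd (by omega))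
  have mem : ∀ m, m ∈ insert (n - x) (G.erase x) ↔ m = n - x ∨ m ≠ x ∧ m ∈ G := by
    simp
  refine ⟨fun y hy => ?_, fun a ha b hb hab => ?_, fun y hy hny => ?_, fun y hy hyn h2y => ?_⟩
  · rcases (mem y).1 hy with rfl | ⟨-, hy⟩
    · omega
    · exact hG.pos_lt y hy
  · rw [mem]
    rcases (mem a).1 ha with rfl | ⟨hax, ha⟩ <;> rcases (mem b).1 hb with rfl | ⟨hbx, hb⟩
    · omega
    · exact Or.inr ⟨by omega, hshift b hb (by omega)⟩
    · exact Or.inr ⟨by omega, add_comm (n - x) a ▸ hshift a ha (by omega)⟩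
    · refine Or.inr ⟨fun h => hxH ?_, hG.add_mem a ha b hb hab⟩
      have := (hG.pos_lt a ha).1
      have := (hG.pos_lt b hb).1
      exact h ▸ hH.add_mem a (hmin a ha (by omega)) b (hmin b hb (by omega)) hab
  · rw [mem] at hy hny
    rcases hy with rfl | ⟨hyx, hy⟩
    · rw [Nat.sub_sub_self hx.2.le] at hny
      omega
    · have := (hG.pos_lt y hy).2
      exact hny.elim (fun h => hyx (by omega)) fun h => hG.sub_notMem y hy h.2
  · rw [mem, mem]
    by_cases hyx : y = x
    · subst hyx
      exact Or.inr (Or.inl rfl)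
    rcases hG.mem_or_sub_mem y hy hyn h2y with h | h
    · exact Or.inl (Or.inr ⟨hyx, h⟩)
    · by_cases hynx : y = n - x
      · exact Or.inl (Or.inl hynx)
      · exact Or.inr (Or.inr ⟨by omega, h⟩)

lemma exists_exchange (hG : IsIrredFacet n G) (hH : IsIrredFacet n H) (hne : G ≠ H)
    (hsum : ∑ y ∈ G, y ≤ ∑ y ∈ H, y) :
    ∃ x ∈ G, x ∉ H ∧ 2 * x < n ∧ IsIrredFacet n (insert (n - x) (G.erase x)) := by
  obtain ⟨y, hy, h2y⟩ := hG.exists_mem_sdiff_two_mul_lt hH hne hsum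
  have hx := min'_mem (G \ H) ⟨y, hy⟩
  have hmin : ∀ z ∈ G, z < (G \ H).min' ⟨y, hy⟩ → z ∈ H := fun z hz hlt => by
    by_contra hzH
    exact (min'_le _ z (mem_sdiff.2 ⟨hz, hzH⟩)).not_gt hlt
  have h2x : 2 * (G \ H).min' ⟨y, hy⟩ < n := by
    have := min'_le _ y hy
    omega
  exact ⟨_, (mem_sdiff.1 hx).1, (mem_sdiff.1 hx).2, h2x,
    hG.exchange hH (mem_sdiff.1 hx).1 (mem_sdiff.1 hx).2 hmin h2x⟩

lemma sum_lt_sum_exchange (hG : IsIrredFacet n G) {x : ℕ} (hxG : x ∈ G) (h2x : 2 * x < n) :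
    ∑ y ∈ G, y < ∑ y ∈ insert (n - x) (G.erase x), y := by
  have hsplit := add_sum_erase G (fun y => y) hxG
  rw [sum_insert fun h => hG.sub_notMem x hxG (mem_of_mem_erase h)]
  omega

lemma exchange_inter (hG : IsIrredFacet n G) {x : ℕ} (hxG : x ∈ G) :
    insert (n - x) (G.erase x) ∩ G = G.erase x := by
  rw [insert_inter_of_notMem (hG.sub_notMem x hxG), inter_eq_left.2 (erase_subset x G)]

end IsIrredFacet

theorem statement5 (n : ℕ) (hn : 2 ≤ n) (r : ℕ) (S : Fin r → AddSubmonoid ℕ)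
    (hirr : ∀ i, IsIrred (S i) ∧ frob (S i) = n)
    (hinj : Function.Injective S)
    (hall : ∀ T : AddSubmonoid ℕ, IsIrred T → frob T = n → ∃ i, S i = T)
    (F : Fin r → Finset ℕ)
    (hF : ∀ i, F i = (Finset.Icc 1 (n - 1)).filter (fun x => x ∈ S i))
    (hord : ∀ i j : Fin r, i < j → ∑ s ∈ F j, s ≤ ∑ s ∈ F i, s) :
    ∀ i j : Fin r, j < i →
      ∃ k : Fin r, k < i ∧ F j ∩ F i ⊆ F k ∩ F i ∧
        (F k ∩ F i).card = (F i).card - 1 := by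
  have hF' : ∀ l, F l = facet n (S l) := hF
  have hfacet : ∀ l, IsIrredFacet n (F l) := fun l => by
    rw [hF', ← (hirr l).2]
    exact (hirr l).1.isIrredFacet
  intro i j hji
  have hne : F i ≠ F j := fun h => hji.ne' <| hinj <| (hirr i).1.eq_of_facet_eq (hirr j).1
    ((hirr i).2.trans (hirr j).2.symm) (by rwa [(hirr i).2, (hirr j).2, ← hF', ← hF'])
  obtain ⟨x, hxi, hxj, h2x, hG⟩ := (hfacet i).exists_exchange (hfacet j) hne (hord j i hji)
  obtain ⟨k, hk⟩ :=
    hall _ (hG.isIrred_toAddSubmonoid (by omega)) (hG.frob_toAddSubmonoid (by omega))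
  have hFk : F k = insert (n - x) ((F i).erase x) := by
    rw [hF', hk, hG.facet_toAddSubmonoid]
  refine ⟨k, lt_of_not_ge fun hik => ?_, fun m hm => ?_, ?_⟩
  · have hlt := hFk ▸ (hfacet i).sum_lt_sum_exchange hxi h2x
    rcases hik.lt_or_eq with hik | rfl
    · exact (hord i k hik).not_gt hlt
    · exact hlt.false
  · rw [hFk, (hfacet i).exchange_inter hxi]
    exact mem_erase.2 ⟨fun h => hxj (h ▸ (mem_inter.1 hm).1), (mem_inter.1 hm).2⟩
  · rw [hFk, (hfacet i).exchange_inter hxi, card_erase_of_mem hxi]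
end

section
/- Let M be a positive integer and p ∈ [0,1]. Then E[e(𝒮)] = p · Σ_{n=1}^{M} a_n(p) and E[g_M(𝒮)] = (1−p) · Σ_{n=1}^{M} a_n(p), where 𝒮 ∼ S(M,p), g_M(S) denotes the number of gaps of S that are at most M, and a_n(p) = Σ_{A ⊆ {1,…,n−1}, n ∉ ⟨A⟩} p^{|A|}(1−p)^{n−1−|A|}. -/
open Filter Topology
open scoped Classical BigOperators

/-!
For `B ⊆ [1, M]`, an element `n` is a minimal generator of `⟨B⟩` iff `n ∈ B` and
`n ∉ ⟨B ∩ [1, n)⟩`, and `n ≤ M` is a gap of `⟨B⟩` iff `n ∉ B` and `n ∉ ⟨B ∩ [1, n)⟩`.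
By linearity of expectation, `E[e(𝒮)]` and `E[g_M(𝒮)]` are sums over `n ≤ M` of the
probabilities of these events. The event `n ∉ ⟨𝒜 ∩ [1, n)⟩` depends only on `𝒜 ∩ [1, n)`, so it
has probability `a_n(p)` and is independent of whether `n ∈ 𝒜`, which gives `p · a_n(p)` and
`(1 - p) · a_n(p)`.
-/

open Finset

theorem sum_card_mul_eq_sum_sum_ite {ι κ R : Type*} [CommSemiring R] [DecidableEq κ]
    (s : Finset ι) (U : Finset κ) (T : ι → Finset κ) (hT : ∀ i ∈ s, T i ⊆ U) (w : ι → R) :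
    ∑ i ∈ s, (#(T i) : R) * w i = ∑ k ∈ U, ∑ i ∈ s, if k ∈ T i then w i else 0 := by
  rw [sum_comm]
  refine sum_congr rfl fun i hi => ?_
  rw [sum_ite_mem, inter_eq_right.mpr (hT i hi), sum_const, nsmul_eq_mul]

theorem eq_zero_or_mem_or_eq_add_of_mem_closure {A : Type*} [AddMonoid A] {s : Set A} {x : A}
    (hx : x ∈ AddSubmonoid.closure s) :
    x = 0 ∨ x ∈ s ∨ ∃ a ∈ AddSubmonoid.closure s, ∃ b ∈ AddSubmonoid.closure s,
      a ≠ 0 ∧ b ≠ 0 ∧ x = a + b := by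
  induction hx using AddSubmonoid.closure_induction with
  | mem y hy => exact .inr (.inl hy)
  | zero => exact .inl rfl
  | add y z hy hz ihy ihz =>
    rcases eq_or_ne y 0 with rfl | hy0
    · simpa using ihz
    rcases eq_or_ne z 0 with rfl | hz0
    · simpa using ihy
    exact .inr (.inr ⟨y, hy, z, hz, hy0, hz0, rfl⟩)

theorem mem_closure_inter_Iio_of_lt {s : Set ℕ} {x n : ℕ} (hx : x ∈ AddSubmonoid.closure s)
    (hxn : x < n) : x ∈ AddSubmonoid.closure (s ∩ Set.Iio n) := by
  induction hx using AddSubmonoid.closure_induction with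
  | mem y hy => exact AddSubmonoid.subset_closure ⟨hy, hxn⟩
  | zero => exact zero_mem _
  | add y z _ _ ihy ihz => exact add_mem (ihy (by omega)) (ihz (by omega))

theorem notMem_closure_iff {s : Set ℕ} {n : ℕ} :
    n ∉ AddSubmonoid.closure s ↔ n ∉ s ∧ n ∉ AddSubmonoid.closure (s ∩ Set.Iio n) := by
  refine ⟨fun h => ⟨fun hn => h (AddSubmonoid.subset_closure hn),
    fun hn => h (AddSubmonoid.closure_mono Set.inter_subset_left hn)⟩, ?_⟩
  rintro ⟨hns, hncl⟩ hn
  rcases eq_zero_or_mem_or_eq_add_of_mem_closure hn with rfl | hn | ⟨a, ha, b, hb, ha0, hb0, rfl⟩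
  · exact hncl (zero_mem _)
  · exact hns hn
  · exact hncl (add_mem (mem_closure_inter_Iio_of_lt ha (by omega))
      (mem_closure_inter_Iio_of_lt hb (by omega)))

theorem mem_minGens_closure_iff {s : Set ℕ} (hs : 0 ∉ s) {n : ℕ} :
    n ∈ minGens (AddSubmonoid.closure s) ↔
      n ∈ s ∧ n ∉ AddSubmonoid.closure (s ∩ Set.Iio n) := by
  constructor
  · rintro ⟨hn, hn0, hnsum⟩
    have hns : n ∈ s := by
      rcases eq_zero_or_mem_or_eq_add_of_mem_closure hn with h | h | h
      exacts [absurd h hn0, h, absurd h hnsum]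
    refine ⟨hns, fun hlt => ?_⟩
    rcases eq_zero_or_mem_or_eq_add_of_mem_closure hlt with h | h | ⟨a, ha, b, hb, h⟩
    · exact hn0 h
    · exact lt_irrefl n h.2
    · have hmono := AddSubmonoid.closure_mono (Set.inter_subset_left (s := s) (t := Set.Iio n))
      exact hnsum ⟨a, hmono ha, b, hmono hb, h⟩
  · rintro ⟨hns, hncl⟩
    refine ⟨AddSubmonoid.subset_closure hns, fun h => hs (h ▸ hns), ?_⟩
    rintro ⟨a, ha, b, hb, ha0, hb0, rfl⟩
    exact hncl (add_mem (mem_closure_inter_Iio_of_lt ha (by omega))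
      (mem_closure_inter_Iio_of_lt hb (by omega)))

theorem embDim_closure {B : Finset ℕ} (hB : 0 ∉ B) :
    embDim (AddSubmonoid.closure (B : Set ℕ)) =
      #{n ∈ B | n ∉ AddSubmonoid.closure ((B : Set ℕ) ∩ Set.Iio n)} := by
  rw [embDim, ← Set.ncard_coe_finset]
  congr 1
  ext n
  simp [mem_minGens_closure_iff (s := (B : Set ℕ)) (by simpa using hB)]

theorem gapsUpTo_closure (s : Set ℕ) (M : ℕ) :
    gapsUpTo (AddSubmonoid.closure s) M =
      #{n ∈ Icc 1 M | n ∉ s ∧ n ∉ AddSubmonoid.closure (s ∩ Set.Iio n)} := by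
  rw [gapsUpTo, ← Set.ncard_coe_finset]
  congr 1
  ext n
  simp only [Set.mem_ofPred_eq, coe_filter, mem_Icc, ← notMem_closure_iff]
  constructor
  · rintro ⟨hn, hnM⟩
    have : n ≠ 0 := by rintro rfl; exact hn (zero_mem _)
    exact ⟨⟨by omega, hnM⟩, hn⟩
  · rintro ⟨⟨-, hnM⟩, hn⟩
    exact ⟨hn, hnM⟩

section SubsetWeight

variable {α R : Type*} [CommRing R]

/-- The probability of drawing exactly `B ⊆ t` when each element of `t` is kept independently
with probability `p`. -/
def subsetWeight (p : R) (t B : Finset α) : R :=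
  p ^ #B * (1 - p) ^ (#t - #B)

theorem sum_subsetWeight (p : R) (t : Finset α) : ∑ B ∈ t.powerset, subsetWeight p t B = 1 := by
  simp [subsetWeight, sum_pow_mul_eq_add_pow]

variable [DecidableEq α]

theorem subsetWeight_union (p : R) {s t A C : Finset α} (hst : Disjoint s t) (hA : A ⊆ s)
    (hC : C ⊆ t) : subsetWeight p (s ∪ t) (A ∪ C) = subsetWeight p s A * subsetWeight p t C := by
  have hsub : #s + #t - (#A + #C) = (#s - #A) + (#t - #C) := by
    have := card_le_card hA; have := card_le_card hC; omega
  rw [subsetWeight, subsetWeight, subsetWeight, card_union_of_disjoint hst,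
    card_union_of_disjoint (hst.mono hA hC), hsub]
  ring

theorem sum_powerset_union_mul_subsetWeight (p : R) {s t : Finset α} (hst : Disjoint s t)
    (f g : Finset α → R) :
    ∑ B ∈ (s ∪ t).powerset, f (B ∩ s) * g (B ∩ t) * subsetWeight p (s ∪ t) B =
      (∑ A ∈ s.powerset, f A * subsetWeight p s A) *
        ∑ C ∈ t.powerset, g C * subsetWeight p t C := by
  rw [sum_mul_sum, ← sum_product']
  refine sum_nbij' (fun B => (B ∩ s, B ∩ t)) (fun x => x.1 ∪ x.2) ?_ ?_ ?_ ?_ ?_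
  · intro B _
    simp only [mem_product, mem_powerset]
    exact ⟨inter_subset_right, inter_subset_right⟩
  · intro x hx
    simp only [mem_product, mem_powerset] at hx ⊢
    exact union_subset_union hx.1 hx.2
  · intro B hB
    rw [← inter_union_distrib_left, inter_eq_left.mpr (mem_powerset.mp hB)]
  · intro x hx
    simp only [mem_product, mem_powerset] at hx
    have h₁ : x.2 ∩ s = ∅ := disjoint_iff_inter_eq_empty.mp (hst.mono_right hx.2).symm
    have h₂ : x.1 ∩ t = ∅ := disjoint_iff_inter_eq_empty.mp (hst.mono_left hx.1)
    refine Prod.ext ?_ ?_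
    · change (x.1 ∪ x.2) ∩ s = x.1
      rw [union_inter_distrib_right, inter_eq_left.mpr hx.1, h₁, union_empty]
    · change (x.1 ∪ x.2) ∩ t = x.2
      rw [union_inter_distrib_right, inter_eq_left.mpr hx.2, h₂, empty_union]
  · intro B hB
    have hw := subsetWeight_union p hst (inter_subset_right (s₁ := B))
      (inter_subset_right (s₁ := B))
    rw [← inter_union_distrib_left, inter_eq_left.mpr (mem_powerset.mp hB)] at hw
    rw [hw]
    ring

theorem sum_mem_mul_subsetWeight (p : R) {t : Finset α} {a : α} (ha : a ∈ t) :
    ∑ C ∈ t.powerset, (if a ∈ C then 1 else 0) * subsetWeight p t C = p := by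
  obtain ⟨u, hau, rfl⟩ : ∃ u, a ∉ u ∧ t = insert a u :=
    ⟨t.erase a, notMem_erase a t, (insert_erase ha).symm⟩
  have hnot : ∀ C ∈ u.powerset, a ∉ C := fun C hC h => hau (mem_powerset.mp hC h)
  rw [sum_powerset_insert hau, sum_eq_zero (fun C hC => by rw [if_neg (hnot C hC), zero_mul]),
    zero_add]
  calc _ = ∑ C ∈ u.powerset, p * subsetWeight p u C := by
        refine sum_congr rfl fun C hC => ?_
        rw [if_pos (mem_insert_self a C), one_mul, subsetWeight, subsetWeight,
          card_insert_of_notMem hau, card_insert_of_notMem (hnot C hC), Nat.add_sub_add_right]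
        ring
    _ = p := by rw [← mul_sum, sum_subsetWeight, mul_one]

theorem sum_notMem_mul_subsetWeight (p : R) {t : Finset α} {a : α} (ha : a ∈ t) :
    ∑ C ∈ t.powerset, (if a ∉ C then 1 else 0) * subsetWeight p t C = 1 - p := by
  calc _ = ∑ C ∈ t.powerset,
        (subsetWeight p t C - (if a ∈ C then 1 else 0) * subsetWeight p t C) :=
        sum_congr rfl fun C _ => by split_ifs <;> ring
    _ = 1 - p := by rw [sum_sub_distrib, sum_subsetWeight, sum_mem_mul_subsetWeight p ha]

end SubsetWeight

theorem wt_eq_subsetWeight (p : ℝ) (M : ℕ) (B : Finset ℕ) :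
    wt p M B = subsetWeight p (Icc 1 M) B := by
  rw [wt, subsetWeight, Nat.card_Icc, Nat.add_sub_cancel]

theorem anp_eq_sum_subsetWeight (n : ℕ) (p : ℝ) :
    anp n p = ∑ A ∈ (Icc 1 (n - 1)).powerset,
      (if n ∉ AddSubmonoid.closure (A : Set ℕ) then 1 else 0) *
        subsetWeight p (Icc 1 (n - 1)) A := by
  refine sum_congr rfl fun A _ => ?_
  rw [ite_mul, one_mul, zero_mul, subsetWeight, Nat.card_Icc, Nat.add_sub_cancel]

theorem sum_notMem_closure_mul_wt {M n : ℕ} (hn : n ∈ Icc 1 M) (p : ℝ)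
    (g : Finset ℕ → ℝ) :
    ∑ B ∈ (Icc 1 M).powerset,
      (if n ∉ AddSubmonoid.closure ((B : Set ℕ) ∩ Set.Iio n) then 1 else 0) *
        g (B ∩ Icc n M) * wt p M B =
      anp n p * ∑ C ∈ (Icc n M).powerset, g C * subsetWeight p (Icc n M) C := by
  rw [mem_Icc] at hn
  have hsplit : Icc 1 M = Icc 1 (n - 1) ∪ Icc n M := by
    ext x; simp only [mem_union, mem_Icc]; omega
  have hdisj : Disjoint (Icc 1 (n - 1)) (Icc n M) := by
    rw [disjoint_left]; intro x; simp only [mem_Icc]; omega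
  rw [anp_eq_sum_subsetWeight, ← sum_powerset_union_mul_subsetWeight p hdisj, ← hsplit]
  refine sum_congr rfl fun B hB => ?_
  have hIio : (B : Set ℕ) ∩ Set.Iio n = ↑(B ∩ Icc 1 (n - 1)) := by
    ext x
    by_cases hx : x ∈ B
    · have := mem_Icc.mp (mem_powerset.mp hB hx)
      simp only [Set.mem_inter_iff, Set.mem_Iio, coe_inter, coe_Icc, Set.mem_Icc, mem_coe, hx,
        true_and]
      omega
    · simp [hx]
  rw [hIio, wt_eq_subsetWeight]

theorem sum_mem_notMem_closure_wt {M n : ℕ} (hn : n ∈ Icc 1 M) (p : ℝ) :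
    ∑ B ∈ (Icc 1 M).powerset,
      (if n ∈ B ∧ n ∉ AddSubmonoid.closure ((B : Set ℕ) ∩ Set.Iio n) then wt p M B else 0) =
      p * anp n p := by
  have hnn : n ∈ Icc n M := mem_Icc.mpr ⟨le_rfl, (mem_Icc.mp hn).2⟩
  calc _ = ∑ B ∈ (Icc 1 M).powerset,
        (if n ∉ AddSubmonoid.closure ((B : Set ℕ) ∩ Set.Iio n) then 1 else 0) *
          (if n ∈ B ∩ Icc n M then 1 else 0) * wt p M B := by
        refine sum_congr rfl fun B _ => ?_
        simp [hnn, ite_and]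
    _ = anp n p * p := by
      rw [sum_notMem_closure_mul_wt hn p (fun C => if n ∈ C then 1 else 0),
        sum_mem_mul_subsetWeight p hnn]
    _ = p * anp n p := mul_comm _ _

theorem sum_notMem_notMem_closure_wt {M n : ℕ} (hn : n ∈ Icc 1 M) (p : ℝ) :
    ∑ B ∈ (Icc 1 M).powerset,
      (if n ∉ B ∧ n ∉ AddSubmonoid.closure ((B : Set ℕ) ∩ Set.Iio n) then wt p M B else 0) =
      (1 - p) * anp n p := by
  have hnn : n ∈ Icc n M := mem_Icc.mpr ⟨le_rfl, (mem_Icc.mp hn).2⟩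
  have hsum : ∑ C ∈ (Icc n M).powerset, (if n ∉ C then 1 else 0) * subsetWeight p (Icc n M) C
      = 1 - p := by
    calc _ = ∑ C ∈ (Icc n M).powerset, (subsetWeight p (Icc n M) C -
          (if n ∈ C then 1 else 0) * subsetWeight p (Icc n M) C) :=
          sum_congr rfl fun C _ => by split_ifs <;> ring
      _ = 1 - p := by
        rw [sum_sub_distrib, sum_subsetWeight, sum_mem_mul_subsetWeight p hnn]
  calc _ = ∑ B ∈ (Icc 1 M).powerset,
        (if n ∉ AddSubmonoid.closure ((B : Set ℕ) ∩ Set.Iio n) then 1 else 0) *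
          (if n ∉ B ∩ Icc n M then 1 else 0) * wt p M B := by
        refine sum_congr rfl fun B _ => ?_
        simp [hnn, ite_and]
    _ = (1 - p) * anp n p := by
      rw [sum_notMem_closure_mul_wt hn p (fun C => if n ∉ C then 1 else 0),
        sum_notMem_mul_subsetWeight p hnn, mul_comm]

theorem statement11_general (M : ℕ) (p : ℝ) :
    expectVal M p embDim = p * ∑ n ∈ Finset.Icc 1 M, anp n p ∧
    expectVal M p (fun S => gapsUpTo S M) = (1 - p) * ∑ n ∈ Finset.Icc 1 M, anp n p := by
  constructor
  · have h0 : ∀ B ∈ (Icc 1 M).powerset, 0 ∉ B := fun B hB h => by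
      simpa using mem_powerset.mp hB h
    calc expectVal M p embDim
        = ∑ B ∈ (Icc 1 M).powerset,
            (#{n ∈ B | n ∉ AddSubmonoid.closure ((B : Set ℕ) ∩ Set.Iio n)} : ℝ) * wt p M B :=
          sum_congr rfl fun B hB => by rw [embDim_closure (h0 B hB)]
      _ = ∑ n ∈ Icc 1 M, p * anp n p := by
          rw [sum_card_mul_eq_sum_sum_ite _ (Icc 1 M) _
            fun B hB => (filter_subset _ B).trans (mem_powerset.mp hB)]
          refine sum_congr rfl fun n hn => ?_
          simp only [mem_filter]
          exact sum_mem_notMem_closure_wt hn p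
      _ = p * ∑ n ∈ Icc 1 M, anp n p := (mul_sum _ _ _).symm
  · calc expectVal M p (fun S => gapsUpTo S M)
        = ∑ B ∈ (Icc 1 M).powerset, (#{n ∈ Icc 1 M | n ∉ B ∧
            n ∉ AddSubmonoid.closure ((B : Set ℕ) ∩ Set.Iio n)} : ℝ) * wt p M B :=
          sum_congr rfl fun B _ => by simp only [gapsUpTo_closure, mem_coe]
      _ = ∑ n ∈ Icc 1 M, (1 - p) * anp n p := by
          rw [sum_card_mul_eq_sum_sum_ite _ (Icc 1 M) _ fun B _ => filter_subset _ _]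
          refine sum_congr rfl fun n hn => ?_
          simp only [mem_filter, hn, true_and]
          exact sum_notMem_notMem_closure_wt hn p
      _ = (1 - p) * ∑ n ∈ Icc 1 M, anp n p := (mul_sum _ _ _).symm

theorem statement11 (M : ℕ) (hM : 1 ≤ M) (p : ℝ) (hp : p ∈ Set.Icc (0 : ℝ) 1) :
    expectVal M p embDim = p * ∑ n ∈ Finset.Icc 1 M, anp n p ∧
    expectVal M p (fun S => gapsUpTo S M) = (1 - p) * ∑ n ∈ Finset.Icc 1 M, anp n p :=
  statement11_general M p
end

section
/- Let p ∈ (0,1) be constant. Then lim_{M→∞} ( E[g(𝒮_M)] − E[g_M(𝒮_M)] ) = 0, where 𝒮_M ∼ S(M, p), g_M(S) denotes the number of gaps of S that are at most M, and g is taken to be 0 on semigroups that are not cofinite. -/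
open Filter Topology
open scoped Classical BigOperators

/-!
If `𝒜` contains two consecutive integers `s, s + 1` with `1 < s` and `s² ≤ M`, then by the
Chicken McNugget theorem every `n ≥ s²` lies in `⟨𝒜⟩`, so `g = g_M`. The pairs
`{2j + 2, 2j + 3}` with `j < ⌊√M⌋ / 2` are disjoint, so `𝒜` contains none of them with probability
exactly `(1 - p²)^(⌊√M⌋ / 2)`. On that event both `g` and `g_M` are still `O(M²)`: for `a ∈ 𝒜`,
the Erdős–Ginzburg–Ziv theorem removes `a` summands with sum divisible by `a` from any
representation with at least `2a - 1` summands, so every residue class mod `a` that meets `⟨𝒜⟩`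
does so below `2aM`, and all gaps of a cofinite `⟨𝒜⟩` are below `2M²`. Finally
`M² (1 - p²)^(⌊√M⌋ / 2) → 0`.
-/

theorem Nat.exists_le_card_eq_dvd_sum {n : ℕ} (l : Multiset ℕ) (hl : 2 * n - 1 ≤ l.card) :
    ∃ u ≤ l, u.card = n ∧ n ∣ u.sum := by
  obtain ⟨t, hts, htn, hdvd⟩ :=
    Int.erdos_ginzburg_ziv (s := l.toEnumFinset) (fun x ↦ (x.1 : ℤ)) (by simpa using hl)
  refine ⟨t.1.map Prod.fst, Multiset.map_fst_le_of_subset_toEnumFinset hts, by simpa using htn, ?_⟩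
  rw [← Int.natCast_dvd_natCast, Nat.cast_multiset_sum, Multiset.map_map]
  rwa [Finset.sum_eq_multiset_sum] at hdvd

namespace AddSubmonoid

theorem mem_of_modEq {S : AddSubmonoid ℕ} {a m n : ℕ} (ha : a ∈ S) (hm : m ∈ S) (hmn : m ≤ n)
    (h : n ≡ m [MOD a]) : n ∈ S := by
  obtain ⟨k, hk⟩ := (Nat.modEq_iff_dvd' hmn).1 h.symm
  rw [← Nat.add_sub_cancel' hmn, hk, mul_comm, ← smul_eq_mul]
  exact S.add_mem hm (S.nsmul_mem ha k)

theorem mem_of_mul_self_le {S : AddSubmonoid ℕ} {s n : ℕ} (hs : 1 < s) (h₀ : s ∈ S)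
    (h₁ : s + 1 ∈ S) (hn : s * s ≤ n) : n ∈ S := by
  have hF := (frobeniusNumber_iff.1 <|
    frobeniusNumber_pair (Nat.coprime_self_add_right.2 (Nat.coprime_one_right s)) hs
      (by omega)).2 n (by have := Nat.le_mul_self s; rw [Nat.mul_succ]; omega)
  exact closure_le.2 (by simp [Set.insert_subset_iff, h₀, h₁]) hF

theorem exists_modEq_le_of_mem_closure {s : Set ℕ} {a M m : ℕ} (ha : 0 < a)
    (hs : ∀ b ∈ s, b ≤ M) (hm : m ∈ closure s) :
    ∃ m' ∈ closure s, m' ≡ m [MOD a] ∧ m' ≤ (2 * a - 2) * M := by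
  obtain ⟨l, hl, rfl⟩ := exists_multiset_of_mem_closure hm
  clear hm
  induction hn : l.card using Nat.strong_induction_on generalizing l with
  | _ n ih =>
  by_cases hshort : l.card ≤ 2 * a - 2
  · refine ⟨l.sum, multiset_sum_mem _ _ fun x hx ↦ subset_closure (hl x hx), rfl, ?_⟩
    calc l.sum ≤ l.card • M := Multiset.sum_le_card_nsmul l M fun x hx ↦ hs x (hl x hx)
      _ ≤ (2 * a - 2) * M := Nat.mul_le_mul_right M hshort
  · obtain ⟨u, hul, hua, hdvd⟩ := Nat.exists_le_card_eq_dvd_sum l (n := a) (by omega)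
    have hsplit : l = u + (l - u) := (add_tsub_cancel_of_le hul).symm
    obtain ⟨m', hm', hmod, hle⟩ := ih (l - u).card
      (by rw [← hn, hsplit, Multiset.card_add, add_tsub_cancel_left]; omega) (l - u)
      (fun x hx ↦ hl x (Multiset.mem_of_le (Multiset.sub_le_self l u) hx)) rfl
    refine ⟨m', hm', ?_, hle⟩
    rw [hsplit, Multiset.sum_add]
    have hu : 0 + (l - u).sum ≡ u.sum + (l - u).sum [MOD a] :=
      ((Nat.modEq_zero_iff_dvd.2 hdvd).add_right _).symm
    exact hmod.trans (by simpa using hu)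

end AddSubmonoid

theorem IsCofinite.exists_forall_lt_mem {S : AddSubmonoid ℕ} (h : IsCofinite S) :
    ∃ N, ∀ n, N < n → n ∈ S := by
  obtain ⟨N, hN⟩ := h.bddAbove
  exact ⟨N, fun n hn ↦ by_contra fun hn' ↦ (hN hn').not_gt hn⟩

theorem genus_closure_le {s : Set ℕ} {M : ℕ} (hs : ∀ b ∈ s, b ≤ M) :
    genus (AddSubmonoid.closure s) ≤ 2 * M * M := by
  by_cases hcof : IsCofinite (AddSubmonoid.closure s)
  swap
  · simp [genus, Set.Infinite.ncard hcof]
  obtain ⟨N, hN⟩ := hcof.exists_forall_lt_mem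
  obtain ⟨a, has, ha⟩ : ∃ a ∈ s, 0 < a := by
    by_contra! h
    have hbot : AddSubmonoid.closure s ≤ ⊥ :=
      AddSubmonoid.closure_le.2 fun a ha ↦ by simp [Nat.le_zero.1 (h a ha)]
    simpa using hbot (hN (N + 1) N.lt_succ_self)
  have hgap : gapSet (AddSubmonoid.closure s) ⊆ Set.Iio ((2 * a - 2) * M) := by
    intro x hx
    obtain ⟨m, hm, hmod, hle⟩ :=
      AddSubmonoid.exists_modEq_le_of_mem_closure ha hs (hN (x + a * (N + 1)) (by nlinarith))
    rw [Set.mem_Iio]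
    by_contra! hxm
    refine hx (AddSubmonoid.mem_of_modEq (AddSubmonoid.subset_closure has) hm (hle.trans hxm) ?_)
    exact (hmod.trans (Nat.ModEq.symm (by simp [Nat.ModEq]))).symm
  calc genus (AddSubmonoid.closure s) ≤ (Set.Iio ((2 * a - 2) * M)).ncard :=
        Set.ncard_le_ncard hgap (Set.finite_Iio _)
    _ ≤ 2 * M * M := by
        rw [Set.ncard_Iio_nat]
        exact Nat.mul_le_mul_right M (by have := hs a has; omega)

theorem gapsUpTo_le (S : AddSubmonoid ℕ) (M : ℕ) : gapsUpTo S M ≤ M + 1 :=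
  calc gapsUpTo S M ≤ (Set.Iio (M + 1)).ncard :=
        Set.ncard_le_ncard (fun _ hx ↦ Nat.lt_succ_of_le hx.2) (Set.finite_Iio _)
    _ = M + 1 := Set.ncard_Iio_nat _

theorem genus_eq_gapsUpTo {S : AddSubmonoid ℕ} {M : ℕ} (h : ∀ x ∉ S, x ≤ M) :
    genus S = gapsUpTo S M := by
  unfold genus gapsUpTo gapSet
  congr 1
  ext x
  exact ⟨fun hx ↦ ⟨hx, h x hx⟩, And.left⟩

section Bernoulli

variable {α : Type*} [DecidableEq α]

def bernoulliWeight (p : ℝ) (s B : Finset α) : ℝ := p ^ B.card * (1 - p) ^ (s \ B).card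

theorem bernoulliWeight_nonneg {p : ℝ} (hp₀ : 0 ≤ p) (hp₁ : p ≤ 1) (s B : Finset α) :
    0 ≤ bernoulliWeight p s B :=
  mul_nonneg (pow_nonneg hp₀ _) (pow_nonneg (sub_nonneg.2 hp₁) _)

theorem sum_bernoulliWeight (p : ℝ) (s : Finset α) :
    ∑ B ∈ s.powerset, bernoulliWeight p s B = 1 := by
  have h := Finset.prod_add (fun _ ↦ p) (fun _ ↦ 1 - p) s
  simp only [Finset.prod_const, add_sub_cancel, one_pow] at h
  exact h.symm

theorem Finset.sum_powerset_union_mul {β : Type*} [CommSemiring β] {u v : Finset α}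
    (h : Disjoint u v) (f g : Finset α → β) :
    ∑ B ∈ (u ∪ v).powerset, f (B ∩ u) * g (B ∩ v)
      = (∑ C ∈ u.powerset, f C) * ∑ D ∈ v.powerset, g D := by
  rw [Finset.sum_mul_sum, ← Finset.sum_product']
  refine Finset.sum_nbij' (fun B ↦ (B ∩ u, B ∩ v)) (fun CD ↦ CD.1 ∪ CD.2) ?_ ?_ ?_ ?_
    fun _ _ ↦ rfl
  · simp
  · intro CD hCD
    simp only [Finset.mem_product, Finset.mem_powerset] at hCD ⊢
    exact Finset.union_subset_union hCD.1 hCD.2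
  · intro B hB
    rw [← Finset.inter_union_distrib_left, Finset.inter_eq_left.2 (Finset.mem_powerset.1 hB)]
  · intro CD hCD
    simp only [Finset.mem_product, Finset.mem_powerset] at hCD
    have := Finset.disjoint_left.1 h
    ext x <;> simp only [Finset.mem_inter, Finset.mem_union] <;> grind

theorem bernoulliWeight_union (p : ℝ) {u v B : Finset α} (h : Disjoint u v) (hB : B ⊆ u ∪ v) :
    bernoulliWeight p (u ∪ v) B = bernoulliWeight p u (B ∩ u) * bernoulliWeight p v (B ∩ v) := by
  have hBuv : B = B ∩ u ∪ B ∩ v := by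
    rw [← Finset.inter_union_distrib_left, Finset.inter_eq_left.2 hB]
  have hcard : B.card = (B ∩ u).card + (B ∩ v).card := by
    conv_lhs => rw [hBuv]
    exact Finset.card_union_of_disjoint
      (h.mono Finset.inter_subset_right Finset.inter_subset_right)
  have hcard' : ((u ∪ v) \ B).card = (u \ (B ∩ u)).card + (v \ (B ∩ v)).card := by
    rw [Finset.sdiff_inter_self_right, Finset.sdiff_inter_self_right, Finset.union_sdiff_distrib]
    exact Finset.card_union_of_disjoint (h.mono Finset.sdiff_subset Finset.sdiff_subset)
  unfold bernoulliWeight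
  rw [hcard, hcard', pow_add, pow_add]
  ring

theorem sum_bernoulliWeight_not_subset (p : ℝ) (u : Finset α) :
    ∑ C ∈ u.powerset, (if ¬ u ⊆ C then bernoulliWeight p u C else 0) = 1 - p ^ u.card := by
  have hfilter : {C ∈ u.powerset | ¬ u ⊆ C} = u.powerset.erase u := by
    ext C
    simp only [Finset.mem_filter, Finset.mem_powerset, Finset.mem_erase]
    exact ⟨fun h ↦ ⟨fun hC ↦ h.2 hC.ge, h.1⟩,
      fun h ↦ ⟨h.2, fun hu ↦ h.1 (Finset.Subset.antisymm h.2 hu)⟩⟩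
  rw [← Finset.sum_filter, hfilter, Finset.sum_erase_eq_sub (Finset.mem_powerset_self u),
    sum_bernoulliWeight]
  simp [bernoulliWeight]

theorem sum_bernoulliWeight_forall_not_subset {ι : Type*} (p : ℝ) {s : Finset α} {J : Finset ι}
    {P : ι → Finset α} (hP : ∀ j ∈ J, P j ⊆ s) (hdisj : (J : Set ι).PairwiseDisjoint P) :
    ∑ B ∈ s.powerset, (if ∀ j ∈ J, ¬ P j ⊆ B then bernoulliWeight p s B else 0)
      = ∏ j ∈ J, (1 - p ^ (P j).card) := by
  classical
  induction J using Finset.induction_on generalizing s with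
  | empty => simp [sum_bernoulliWeight]
  | @insert a J ha ih =>
  have hPa : P a ⊆ s := hP a (Finset.mem_insert_self a J)
  have hrest : ∀ j ∈ J, P j ⊆ s \ P a := fun j hj ↦ Finset.subset_sdiff.2
    ⟨hP j (Finset.mem_insert_of_mem hj), hdisj (by simp [hj]) (by simp) (by rintro rfl; exact ha hj)⟩
  have hsplit : ∀ B ∈ (P a ∪ s \ P a).powerset,
      (if ∀ j ∈ insert a J, ¬ P j ⊆ B then bernoulliWeight p (P a ∪ s \ P a) B else 0)
        = (if ¬ P a ⊆ B ∩ P a then bernoulliWeight p (P a) (B ∩ P a) else 0)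
          * (if ∀ j ∈ J, ¬ P j ⊆ B ∩ (s \ P a) then
              bernoulliWeight p (s \ P a) (B ∩ (s \ P a)) else 0) := by
    intro B hB
    have hPa' : P a ⊆ B ∩ P a ↔ P a ⊆ B := by simp [Finset.subset_inter_iff]
    have hrest' : ∀ j ∈ J, P j ⊆ B ∩ (s \ P a) ↔ P j ⊆ B := fun j hj ↦ by
      simp [Finset.subset_inter_iff, hrest j hj]
    rw [bernoulliWeight_union p Finset.disjoint_sdiff (Finset.mem_powerset.1 hB)]
    simp only [Finset.forall_mem_insert, hPa']
    split_ifs <;> grind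
  rw [← Finset.union_sdiff_of_subset hPa, Finset.sum_congr rfl hsplit,
    Finset.sum_powerset_union_mul Finset.disjoint_sdiff
      (fun C ↦ if ¬ P a ⊆ C then bernoulliWeight p (P a) C else 0)
      (fun D ↦ if ∀ j ∈ J, ¬ P j ⊆ D then bernoulliWeight p (s \ P a) D else 0),
    sum_bernoulliWeight_not_subset,
    ih hrest (hdisj.subset (by simp)), Finset.prod_insert ha]

end Bernoulli

def consecPair (j : ℕ) : Finset ℕ := {2 * j + 2, 2 * j + 3}

theorem card_consecPair (j : ℕ) : (consecPair j).card = 2 := by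
  simp [consecPair]

theorem pairwiseDisjoint_consecPair (s : Set ℕ) : s.PairwiseDisjoint consecPair := by
  intro i _ j _ hij
  simp only [Function.onFun, consecPair, Finset.disjoint_insert_left, Finset.mem_insert,
    Finset.mem_singleton, Finset.disjoint_singleton_left]
  omega

theorem sq_two_mul_add_two_le {j t M : ℕ} (hj : j < t) (ht : (2 * t) ^ 2 ≤ M) :
    (2 * j + 2) ^ 2 ≤ M :=
  (Nat.pow_le_pow_left (by omega) 2).trans ht

theorem consecPair_subset_Icc {j M : ℕ} (hj : (2 * j + 2) ^ 2 ≤ M) :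
    consecPair j ⊆ Finset.Icc 1 M := by
  intro x hx
  simp only [consecPair, Finset.mem_insert, Finset.mem_singleton] at hx
  rw [Finset.mem_Icc]
  rcases hx with rfl | rfl <;> constructor <;> nlinarith

theorem genus_eq_gapsUpTo_of_consecPair_subset {B : Finset ℕ} {j M : ℕ}
    (hj : (2 * j + 2) ^ 2 ≤ M) (hB : consecPair j ⊆ B) :
    genus (AddSubmonoid.closure (B : Set ℕ)) = gapsUpTo (AddSubmonoid.closure (B : Set ℕ)) M := by
  refine genus_eq_gapsUpTo fun x hx ↦ ?_
  by_contra! hMx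
  have hmem : ∀ b ∈ consecPair j, b ∈ AddSubmonoid.closure (B : Set ℕ) :=
    fun b hb ↦ AddSubmonoid.subset_closure (hB hb)
  exact hx (AddSubmonoid.mem_of_mul_self_le (s := 2 * j + 2) (by omega)
    (hmem _ (by simp [consecPair])) (hmem _ (by simp [consecPair])) (by rw [← sq]; omega))

theorem abs_genus_sub_gapsUpTo_le {B : Finset ℕ} {t M : ℕ} (hB : B ⊆ Finset.Icc 1 M)
    (ht : (2 * t) ^ 2 ≤ M) :
    |(genus (AddSubmonoid.closure (B : Set ℕ)) : ℝ) - gapsUpTo (AddSubmonoid.closure (B : Set ℕ)) M|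
      ≤ if ∀ j ∈ Finset.range t, ¬ consecPair j ⊆ B then 2 * ((M : ℝ) + 1) ^ 2 else 0 := by
  split_ifs with hbad
  · have hg : (genus (AddSubmonoid.closure (B : Set ℕ)) : ℝ) ≤ 2 * M * M := by
      exact_mod_cast genus_closure_le fun b hb ↦ (Finset.mem_Icc.1 (hB hb)).2
    have hu : (gapsUpTo (AddSubmonoid.closure (B : Set ℕ)) M : ℝ) ≤ M + 1 := by
      exact_mod_cast gapsUpTo_le _ M
    rw [abs_sub_le_iff]
    constructor <;> nlinarith [(genus (AddSubmonoid.closure (B : Set ℕ))).cast_nonneg (α := ℝ),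
      (gapsUpTo (AddSubmonoid.closure (B : Set ℕ)) M).cast_nonneg (α := ℝ)]
  · push Not at hbad
    obtain ⟨j, hj, hjB⟩ := hbad
    rw [genus_eq_gapsUpTo_of_consecPair_subset (sq_two_mul_add_two_le (Finset.mem_range.1 hj) ht)
      hjB, sub_self, abs_zero]

theorem wt_eq_bernoulliWeight (p : ℝ) {M : ℕ} {B : Finset ℕ} (hB : B ⊆ Finset.Icc 1 M) :
    wt p M B = bernoulliWeight p (Finset.Icc 1 M) B := by
  rw [wt, bernoulliWeight, Finset.card_sdiff_of_subset hB, Nat.card_Icc, Nat.add_sub_cancel]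

theorem abs_expectVal_genus_sub_gapsUpTo_le {p : ℝ} (hp₀ : 0 ≤ p) (hp₁ : p ≤ 1) (M : ℕ) :
    |expectVal M p genus - expectVal M p (fun S ↦ gapsUpTo S M)|
      ≤ 2 * ((M : ℝ) + 1) ^ 2 * (1 - p ^ 2) ^ (Nat.sqrt M / 2) := by
  set t := Nat.sqrt M / 2
  have ht : (2 * t) ^ 2 ≤ M := (Nat.pow_le_pow_left (by omega) 2).trans (Nat.sqrt_le' M)
  have hpairs : ∀ j ∈ Finset.range t, consecPair j ⊆ Finset.Icc 1 M := fun j hj ↦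
    consecPair_subset_Icc (sq_two_mul_add_two_le (Finset.mem_range.1 hj) ht)
  unfold expectVal
  rw [← Finset.sum_sub_distrib]
  calc _ ≤ ∑ B ∈ (Finset.Icc 1 M).powerset,
        |((genus (AddSubmonoid.closure (B : Set ℕ)) : ℝ) * wt p M B
          - (gapsUpTo (AddSubmonoid.closure (B : Set ℕ)) M : ℝ) * wt p M B)| :=
        Finset.abs_sum_le_sum_abs _ _
    _ ≤ ∑ B ∈ (Finset.Icc 1 M).powerset, 2 * ((M : ℝ) + 1) ^ 2 *
        (if ∀ j ∈ Finset.range t, ¬ consecPair j ⊆ B then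
          bernoulliWeight p (Finset.Icc 1 M) B else 0) := by
        refine Finset.sum_le_sum fun B hB ↦ ?_
        have hB := Finset.mem_powerset.1 hB
        have hw := bernoulliWeight_nonneg hp₀ hp₁ (Finset.Icc 1 M) B
        rw [wt_eq_bernoulliWeight p hB, ← sub_mul, abs_mul, abs_of_nonneg hw, mul_ite, mul_zero,
          ← ite_zero_mul]
        exact mul_le_mul_of_nonneg_right (abs_genus_sub_gapsUpTo_le hB ht) hw
    _ = 2 * ((M : ℝ) + 1) ^ 2 * (1 - p ^ 2) ^ t := by
        rw [← Finset.mul_sum, sum_bernoulliWeight_forall_not_subset p hpairs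
          (pairwiseDisjoint_consecPair _)]
        simp [card_consecPair]

theorem tendsto_succ_pow_mul_pow {q : ℝ} (hq₀ : 0 < q) (hq₁ : q < 1) (d : ℕ) :
    Tendsto (fun k : ℕ ↦ ((k : ℝ) + 1) ^ d * q ^ k) atTop (𝓝 0) := by
  have h := ((tendsto_pow_const_mul_const_pow_of_lt_one d hq₀.le hq₁).comp
    (tendsto_add_atTop_nat 1)).const_mul q⁻¹
  rw [mul_zero] at h
  refine h.congr fun k ↦ ?_
  simp only [Function.comp_apply, Nat.cast_add, Nat.cast_one, pow_succ]
  field_simp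

theorem succ_le_sq_sqrt_div_two (M : ℕ) : M + 1 ≤ 4 * (Nat.sqrt M / 2 + 1) ^ 2 := by
  have h := Nat.lt_succ_sqrt' M
  have : Nat.sqrt M + 1 ≤ 2 * (Nat.sqrt M / 2 + 1) := by omega
  nlinarith

theorem tendsto_sq_mul_pow_sqrt_div_two {q : ℝ} (hq₀ : 0 < q) (hq₁ : q < 1) :
    Tendsto (fun M : ℕ ↦ 2 * ((M : ℝ) + 1) ^ 2 * q ^ (Nat.sqrt M / 2)) atTop (𝓝 0) := by
  have hk : Tendsto (fun M : ℕ ↦ Nat.sqrt M / 2) atTop atTop :=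
    tendsto_atTop_atTop.2 fun b ↦ ⟨(2 * b) ^ 2, fun M hM ↦ by
      have := Nat.le_sqrt'.2 hM; omega⟩
  have h := ((tendsto_succ_pow_mul_pow hq₀ hq₁ 4).comp hk).const_mul 32
  rw [mul_zero] at h
  refine squeeze_zero (fun M ↦ by positivity) (fun M ↦ ?_) h
  have hM : ((M : ℝ) + 1) ≤ 4 * ((Nat.sqrt M / 2 : ℕ) + 1) ^ 2 := by
    exact_mod_cast succ_le_sq_sqrt_div_two M
  calc 2 * ((M : ℝ) + 1) ^ 2 * q ^ (Nat.sqrt M / 2)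
      ≤ 2 * (4 * ((Nat.sqrt M / 2 : ℕ) + 1) ^ 2) ^ 2 * q ^ (Nat.sqrt M / 2) := by gcongr
    _ = _ := by simp only [Function.comp_apply]; ring

theorem statement15 (p : ℝ) (hp : p ∈ Set.Ioo (0 : ℝ) 1) :
    Tendsto (fun M : ℕ =>
        expectVal M p genus - expectVal M p (fun S => gapsUpTo S M))
      atTop (𝓝 0) := by
  obtain ⟨hp₀, hp₁⟩ := hp
  refine squeeze_zero_norm (fun M ↦ abs_expectVal_genus_sub_gapsUpTo_le hp₀.le hp₁.le M) ?_
  exact tendsto_sq_mul_pow_sqrt_div_two (by nlinarith) (by nlinarith)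
end
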